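/- arXiv:2510.02217 — 4 statements merged into one kernel-verified Lean document; each statement's English description precedes it below -/
import Mathlib

section
/- Let A, B, C be closed, connected, pairwise disjoint subsets of a closed disc 𝔻 = D ⊔ S, each intersecting the boundary circle S. Then B separates A from C in 𝔻 (i.e., A and C lie in distinct connected components of 𝔻 \ B) if and only if B ∩ S separates A ∩ S from C ∩ S in S. -/
open Metric

noncomputable section

abbrev E2 := EuclideanSpace ℝ (Fin 2)

def disc : Set E2 := closedBall 0 1
def circ : Set E2 := sphere 0 1

noncomputable def Complex.abs : AbsoluteValue ℂ ℝ := NormedField.toAbsoluteValue ℂ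

lemma Complex.abs_apply' (z : ℂ) : Complex.abs z = ‖z‖ := rfl

lemma Complex.abs_re_le_abs (z : ℂ) : |z.re| ≤ Complex.abs z := Complex.abs_re_le_norm z

lemma Complex.abs_exp_ofReal_mul_I (x : ℝ) : Complex.abs (Complex.exp (x * Complex.I)) = 1 :=
  Complex.norm_exp_ofReal_mul_I x

lemma Complex.abs_ofReal (r : ℝ) : Complex.abs (r : ℂ) = |r| := Complex.norm_real r

@[simp] lemma Complex.abs_two : Complex.abs 2 = 2 := by
  rw [Complex.abs_apply']; norm_num

lemma Complex.continuous_abs : Continuous Complex.abs := continuous_norm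

lemma Complex.abs_mul_exp_arg_mul_I (z : ℂ) :
    ((Complex.abs z : ℝ) : ℂ) * Complex.exp ((z.arg : ℂ) * Complex.I) = z :=
  Complex.norm_mul_exp_arg_mul_I z

namespace SepAux

open Set

open Complex


open Complex

lemma near_one_slit {z : ℂ} (h : Complex.abs (z - 1) < 1) : z ∈ Complex.slitPlane := by
  rw [Complex.mem_slitPlane_iff]
  left
  have h1 : |(z - 1).re| ≤ Complex.abs (z - 1) := Complex.abs_re_le_abs _
  have h2 : (z - 1).re = z.re - 1 := by simp
  rw [h2] at h1
  have := abs_lt.mp (lt_of_le_of_lt h1 h)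
  linarith [this.1]

lemma exp_ang_eq {μ θ : ℝ} (h : Complex.exp (μ * I) = Complex.exp (θ * I)) :
    ∃ n : ℤ, μ = θ + n * (2 * Real.pi) := by
  rw [Complex.exp_eq_exp_iff_exists_int] at h
  obtain ⟨n, hn⟩ := h
  refine ⟨n, ?_⟩
  have : ((μ : ℂ)) * I = ((θ + n * (2 * Real.pi) : ℝ) : ℂ) * I := by
    rw [hn]; push_cast; ring
  have h2 : ((μ : ℂ)) = ((θ + n * (2 * Real.pi) : ℝ) : ℂ) :=
    mul_right_cancel₀ Complex.I_ne_zero this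
  exact_mod_cast h2

lemma not_exp_eq {μ θ : ℝ} (hne : μ ≠ θ) (hlt : |μ - θ| < 2 * Real.pi) :
    Complex.exp (μ * I) ≠ Complex.exp (θ * I) := by
  intro h
  obtain ⟨n, hn⟩ := exp_ang_eq h
  have hπ := Real.pi_pos
  rcases lt_trichotomy n 0 with h0 | h0 | h0
  · have hn1 : n ≤ -1 := by omega
    have : (n : ℝ) ≤ -1 := by exact_mod_cast hn1
    rw [hn] at hlt
    rw [abs_lt] at hlt
    nlinarith [hlt.1]
  · subst h0; simp at hn; exact hne (by linarith [hn])
  · have : (1 : ℝ) ≤ (n : ℝ) := by exact_mod_cast h0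
    rw [hn, abs_lt] at hlt
    nlinarith [hlt.2]

/-- Uniqueness of logarithm lifts up to a constant, in difference form. -/
lemma lift_unique {f L₁ L₂ : ℝ → ℂ} {a b : ℝ}
    (h1c : ContinuousOn L₁ (Icc a b)) (h1 : ∀ t ∈ Icc a b, Complex.exp (L₁ t) = f t)
    (h2c : ContinuousOn L₂ (Icc a b)) (h2 : ∀ t ∈ Icc a b, Complex.exp (L₂ t) = f t)
    {t : ℝ} (ht : t ∈ Icc a b) : L₁ t - L₂ t = L₁ a - L₂ a := by
  have hab : a ≤ b := ht.1.trans ht.2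
  have ha : a ∈ Icc a b := ⟨le_rfl, hab⟩
  set g : ℝ → ℂ := fun s => L₁ s - L₂ s with hg
  have hgc : ContinuousOn g (Icc a b) := h1c.sub h2c
  have hg1 : ∀ s ∈ Icc a b, ∃ n : ℤ, g s = n * (2 * Real.pi * I) := by
    intro s hs
    have : Complex.exp (g s) = 1 := by
      rw [hg]; simp only []
      rw [Complex.exp_sub, h1 s hs, h2 s hs]
      have : f s ≠ 0 := by rw [← h1 s hs]; exact Complex.exp_ne_zero _
      field_simp
    rwa [Complex.exp_eq_one_iff] at this
  obtain ⟨n, hn⟩ := hg1 t ht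
  obtain ⟨m, hm⟩ := hg1 a ha
  have him : ∀ (k : ℤ), ((k : ℂ) * (2 * Real.pi * I)).im = k * (2 * Real.pi) := by
    intro k; simp [Complex.mul_im]
  by_cases hmn : m = n
  · have : g t = g a := by rw [hn, hm, hmn]
    exact this
  · exfalso
    -- the image of Icc a b under im ∘ g is preconnected, contains 2πm and 2πn,
    -- hence contains an odd multiple of π, impossible.
    have hconn : IsPreconnected ((fun s => (g s).im) '' Icc a b) :=
      isPreconnected_Icc.image _ (Complex.continuous_im.comp_continuousOn hgc)
    have hmem1 : (m : ℝ) * (2 * Real.pi) ∈ (fun s => (g s).im) '' Icc a b :=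
      ⟨a, ha, show (g a).im = _ by rw [hm, him]⟩
    have hmem2 : (n : ℝ) * (2 * Real.pi) ∈ (fun s => (g s).im) '' Icc a b :=
      ⟨t, ht, show (g t).im = _ by rw [hn, him]⟩
    have hπ := Real.pi_pos
    -- pick odd multiple between
    have key : ∀ r ∈ Icc ((m:ℝ) * (2*Real.pi)) ((n:ℝ)*(2*Real.pi)) ∪
        Icc ((n:ℝ) * (2*Real.pi)) ((m:ℝ)*(2*Real.pi)), r ∈ (fun s => (g s).im) '' Icc a b := by
      intro r hr
      rcases hr with hr | hr
      · exact hconn.Icc_subset hmem1 hmem2 hr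
      · exact hconn.Icc_subset hmem2 hmem1 hr
    rcases lt_or_gt_of_ne (fun h : (m:ℝ) = (n:ℝ) => hmn (by exact_mod_cast h)) with hlt | hlt
    · have hmem : ((2*m+1 : ℝ)) * Real.pi ∈ (fun s => (g s).im) '' Icc a b := by
        apply key; left
        constructor
        · nlinarith
        · have : (m:ℝ) + 1 ≤ n := by
            have : m + 1 ≤ n := by
              have : m < n := by exact_mod_cast hlt
              omega
            exact_mod_cast this
          nlinarith
      obtain ⟨s, hs, hval0⟩ := hmem
      have hval : (g s).im = (2*(m:ℝ)+1) * Real.pi := hval0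
      obtain ⟨k, hk⟩ := hg1 s hs
      rw [hk, him] at hval
      have : (2*(k:ℝ)) * Real.pi = (2*(m:ℝ)+1) * Real.pi := by linarith [hval]
      have h2 : 2*(k:ℝ) = 2*(m:ℝ)+1 := by
        field_simp at this
        linarith
      have : (2*k : ℤ) = 2*m+1 := by exact_mod_cast h2
      omega
    · have hmem : ((2*n+1 : ℝ)) * Real.pi ∈ (fun s => (g s).im) '' Icc a b := by
        apply key; right
        constructor
        · nlinarith
        · have : (n:ℝ) + 1 ≤ m := by
            have : n + 1 ≤ m := by
              have : n < m := by exact_mod_cast hlt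
              omega
            exact_mod_cast this
          nlinarith
      obtain ⟨s, hs, hval0⟩ := hmem
      have hval : (g s).im = (2*(n:ℝ)+1) * Real.pi := hval0
      obtain ⟨k, hk⟩ := hg1 s hs
      rw [hk, him] at hval
      have h2 : 2*(k:ℝ) = 2*(n:ℝ)+1 := by
        have : (2*(k:ℝ)) * Real.pi = (2*(n:ℝ)+1) * Real.pi := by linarith [hval]
        field_simp at this
        linarith
      have : (2*k : ℤ) = 2*n+1 := by exact_mod_cast h2
      omega



lemma continuousOn_union_closed {f : ℝ → ℂ} {s t : Set ℝ} (hs : IsClosed s) (ht : IsClosed t)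
    (hfs : ContinuousOn f s) (hft : ContinuousOn f t) : ContinuousOn f (s ∪ t) := by
  intro x hx
  rcases hx with hxs | hxt
  · have h1 : ContinuousWithinAt f s x := hfs x hxs
    by_cases hxt : x ∈ t
    · exact (h1.union (hft x hxt))
    · have h2 : ContinuousWithinAt f t x :=
        continuousWithinAt_of_notMem_closure (by rwa [ht.closure_eq])
      exact h1.union h2
  · have h1 : ContinuousWithinAt f t x := hft x hxt
    by_cases hxs : x ∈ s
    · exact ((hfs x hxs).union h1)
    · have h2 : ContinuousWithinAt f s x :=
        continuousWithinAt_of_notMem_closure (by rwa [hs.closure_eq])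
      exact h2.union h1

lemma near_one_slit' {z w : ℂ} (hw : w ≠ 0) (h : Complex.abs (z - w) < Complex.abs w) :
    z / w ∈ Complex.slitPlane := by
  apply near_one_slit
  have : z / w - 1 = (z - w) / w := by field_simp
  rw [this, map_div₀]
  rw [div_lt_one (by simpa [Complex.abs.pos_iff] using hw)]
  exact h

lemma exists_lift {f : ℝ → ℂ} {a b : ℝ}
    (hf : ContinuousOn f (Icc a b)) (h0 : ∀ t ∈ Icc a b, f t ≠ 0) :
    ∃ L : ℝ → ℂ, ContinuousOn L (Icc a b) ∧ ∀ t ∈ Icc a b, Complex.exp (L t) = f t := by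
  rcases lt_or_ge b a with hab | hab
  · exact ⟨0, by rw [Icc_eq_empty_of_lt hab]; exact continuousOn_empty _,
      by rw [Icc_eq_empty_of_lt hab]; intro t ht; exact absurd ht (notMem_empty t)⟩
  set T := {c : ℝ | c ∈ Icc a b ∧ ∃ L : ℝ → ℂ, ContinuousOn L (Icc a c) ∧
      ∀ t ∈ Icc a c, Complex.exp (L t) = f t} with hT
  have haT : a ∈ T := by
    refine ⟨⟨le_rfl, hab⟩, fun _ => Complex.log (f a), continuousOn_const, ?_⟩
    intro t ht
    have hta : t = a := le_antisymm ht.2 ht.1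
    subst hta
    exact Complex.exp_log (h0 t ⟨le_rfl, hab⟩)
  have hbdd : BddAbove T := ⟨b, fun c hc => hc.1.2⟩
  set c0 := sSup T with hc0def
  have hc0 : c0 ∈ Icc a b := ⟨le_csSup hbdd haT, csSup_le ⟨a, haT⟩ fun c hc => hc.1.2⟩
  have hfc0 : f c0 ≠ 0 := h0 c0 hc0
  have habs : 0 < Complex.abs (f c0) := by
    simpa [Complex.abs.pos_iff] using hfc0
  obtain ⟨δ, hδpos, hδ⟩ : ∃ δ > 0, ∀ t ∈ Icc a b, |t - c0| < δ →
      Complex.abs (f t - f c0) < Complex.abs (f c0) := by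
    have := Metric.continuousWithinAt_iff.mp (hf c0 hc0) (Complex.abs (f c0)) habs
    obtain ⟨δ, hδpos, hδ⟩ := this
    exact ⟨δ, hδpos, fun t ht hlt => by
      have := hδ ht (by rwa [Real.dist_eq]); rwa [Complex.dist_eq] at this⟩
  -- the extension target
  set d := min b (c0 + δ/2) with hd
  have hc0d : c0 ≤ d := le_min hc0.2 (by linarith)
  have hdb : d ≤ b := min_le_left _ _
  have hda : a ≤ d := hc0.1.trans hc0d
  -- pick c ∈ T with c0 - δ/2 < c
  obtain ⟨c, hcT, hcgt⟩ : ∃ c ∈ T, c0 - δ/2 < c := by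
    obtain ⟨c, hcT, hcgt⟩ := exists_lt_of_lt_csSup ⟨a, haT⟩ (show c0 - δ/2 < c0 by linarith)
    exact ⟨c, hcT, hcgt⟩
  have hcle : c ≤ c0 := le_csSup hbdd hcT
  obtain ⟨hcI, L, hLc, hLe⟩ := hcT
  -- the correction function
  set g : ℝ → ℂ := fun t => Complex.log (f t / f c0) with hgdef
  have hsub : Icc c d ⊆ Icc a b ∩ {t | |t - c0| < δ} := by
    intro t ht
    refine ⟨⟨hcI.1.trans ht.1, ht.2.trans hdb⟩, ?_⟩
    rw [mem_setOf_eq, abs_lt]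
    constructor
    · have : c0 - δ/2 < t := lt_of_lt_of_le hcgt ht.1
      linarith
    · have : t ≤ c0 + δ/2 := ht.2.trans (min_le_right _ _)
      linarith
  have hgc : ContinuousOn g (Icc c d) := by
    apply ContinuousOn.clog
    · exact ((hf.mono (fun t ht => (hsub ht).1)).div_const _)
    · intro t ht
      exact near_one_slit' hfc0 (hδ t (hsub ht).1 (hsub ht).2)
  have hgexp : ∀ t ∈ Icc c d, Complex.exp (g t) = f t / f c0 := by
    intro t ht
    exact Complex.exp_log (div_ne_zero (h0 t (hsub ht).1) hfc0)
  have hfc : f c ≠ 0 := by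
    rw [← hLe c ⟨hcI.1, le_rfl⟩]; exact Complex.exp_ne_zero _
  have hcd : c ≤ d := hcle.trans hc0d
  set L' : ℝ → ℂ := fun t => if t ≤ c then L t else g t - g c + L c with hL'
  have hL'1 : ContinuousOn L' (Icc a c) := by
    apply ContinuousOn.congr hLc
    intro t ht; simp only [hL']; rw [if_pos ht.2]
  have hL'2 : ContinuousOn L' (Icc c d) := by
    have hbase : ContinuousOn (fun t => g t - g c + L c) (Icc c d) :=
      (hgc.sub continuousOn_const).add continuousOn_const
    apply ContinuousOn.congr hbase
    intro t ht
    simp only [hL']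
    by_cases htc : t ≤ c
    · have : t = c := le_antisymm htc ht.1
      subst this; rw [if_pos le_rfl]; ring
    · rw [if_neg htc]
  have hL'cont : ContinuousOn L' (Icc a d) := by
    have := continuousOn_union_closed isClosed_Icc isClosed_Icc hL'1 hL'2
    apply this.mono
    rw [Icc_union_Icc_eq_Icc hcI.1 hcd]
  have hL'exp : ∀ t ∈ Icc a d, Complex.exp (L' t) = f t := by
    intro t ht
    simp only [hL']
    by_cases htc : t ≤ c
    · rw [if_pos htc]; exact hLe t ⟨ht.1, htc⟩
    · rw [if_neg htc]
      push_neg at htc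
      have htcd : t ∈ Icc c d := ⟨htc.le, ht.2⟩
      rw [Complex.exp_add, Complex.exp_sub, hgexp t htcd, hgexp c ⟨le_rfl, hcd⟩,
        hLe c ⟨hcI.1, le_rfl⟩]
      field_simp
  have hdT : d ∈ T := ⟨⟨hda, hdb⟩, L', hL'cont, hL'exp⟩
  have hdc0 : d ≤ c0 := le_csSup hbdd hdT
  have hbc0 : b ≤ c0 := by
    by_contra hb
    push_neg at hb
    have : c0 < d := lt_min hb (by linarith)
    linarith
  have hc0b : c0 = b := le_antisymm hc0.2 hbc0
  have hdb' : d = b := by rw [hd, hc0b]; exact min_eq_left (by linarith)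
  rw [hdb'] at hL'cont hL'exp
  exact ⟨L', hL'cont, hL'exp⟩




open scoped Classical in
def HasLift (f : ℝ → ℂ) (a b : ℝ) : Prop :=
  ∃ L : ℝ → ℂ, ContinuousOn L (Icc a b) ∧ ∀ t ∈ Icc a b, Complex.exp (L t) = f t

open scoped Classical in
noncomputable def wind (f : ℝ → ℂ) (a b : ℝ) : ℂ :=
  if h : HasLift f a b then h.choose b - h.choose a else 0

lemma wind_eq {f L : ℝ → ℂ} {a b : ℝ} (hab : a ≤ b) (hLc : ContinuousOn L (Icc a b))
    (hLe : ∀ t ∈ Icc a b, Complex.exp (L t) = f t) : wind f a b = L b - L a := by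
  have h : HasLift f a b := ⟨L, hLc, hLe⟩
  rw [wind]
  rw [dif_pos h]
  obtain ⟨hc, he⟩ := h.choose_spec
  have := lift_unique hc he hLc hLe (⟨hab, le_rfl⟩ : b ∈ Icc a b)
  linear_combination this

/-- winding of a loop is unchanged under small perturbation of the base point -/
lemma wind_sub_eq {f : ℝ → ℂ} {a b : ℝ} (hab : a ≤ b) (hf : ContinuousOn f (Icc a b))
    (hloop : f b = f a) {x y : ℂ}
    (hxy : ∀ t ∈ Icc a b, Complex.abs (y - x) < Complex.abs (f t - x)) :
    wind (fun t => f t - y) a b = wind (fun t => f t - x) a b := by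
  have hne : ∀ t ∈ Icc a b, f t - x ≠ 0 := by
    intro t ht h0
    have := hxy t ht
    rw [h0] at this
    simp at this
    have := Complex.abs.nonneg (y - x)
    linarith
  obtain ⟨L, hLc, hLe⟩ := exists_lift (f := fun t => f t - x) (hf.sub continuousOn_const) hne
  have hyne : ∀ t ∈ Icc a b, f t - y ≠ 0 := by
    intro t ht h0
    have h1 := hxy t ht
    have : y - x = f t - x := by rw [sub_eq_zero] at h0; rw [h0]
    rw [this] at h1
    exact lt_irrefl _ h1
  set Q : ℝ → ℂ := fun t => (f t - y) / (f t - x) with hQ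
  have hQslit : ∀ t ∈ Icc a b, Q t ∈ Complex.slitPlane := by
    intro t ht
    apply near_one_slit' (hne t ht)
    have : f t - y - (f t - x) = x - y := by ring
    rw [this]
    rw [← Complex.abs.map_neg (x - y)]
    simpa using hxy t ht
  set L' : ℝ → ℂ := fun t => L t + Complex.log (Q t) with hL'
  have hL'c : ContinuousOn L' (Icc a b) := by
    apply hLc.add
    apply ContinuousOn.clog
    · exact (hf.sub continuousOn_const).div (hf.sub continuousOn_const) hne
    · exact hQslit
  have hL'e : ∀ t ∈ Icc a b, Complex.exp (L' t) = f t - y := by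
    intro t ht
    have hQne : Q t ≠ 0 := Complex.slitPlane_ne_zero (hQslit t ht)
    rw [hL']
    simp only []
    rw [Complex.exp_add, hLe t ht, Complex.exp_log hQne]
    show (f t - x) * ((f t - y) / (f t - x)) = f t - y
    rw [mul_div_assoc', mul_comm]
    exact mul_div_cancel_right₀ _ (hne t ht)
  rw [wind_eq hab hL'c hL'e, wind_eq hab hLc hLe]
  have hQb : Q b = Q a := by rw [hQ]; simp only []; rw [hloop]
  simp only [hL']
  rw [hQb]
  ring

lemma wind_const {f : ℝ → ℂ} {a b : ℝ} (hab : a ≤ b) (hf : ContinuousOn f (Icc a b))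
    (hloop : f b = f a) {K : Set ℂ} (hK : IsPreconnected K)
    (hdisj : ∀ x ∈ K, ∀ t ∈ Icc a b, f t ≠ x) {x y : ℂ} (hx : x ∈ K) (hy : y ∈ K) :
    wind (fun t => f t - x) a b = wind (fun t => f t - y) a b := by
  set W : ℂ → ℂ := fun z => wind (fun t => f t - z) a b with hW
  -- local constancy
  have hloc : ∀ z : ℂ, (∀ t ∈ Icc a b, f t ≠ z) → ∃ ε > 0, ∀ w : ℂ, dist w z < ε →
      ((∀ t ∈ Icc a b, f t ≠ w) ∧ W w = W z) := by
    intro z hz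
    obtain ⟨t0, ht0, hmin0⟩ := isCompact_Icc.exists_isMinOn (nonempty_Icc.mpr hab)
      ((Complex.continuous_abs.comp_continuousOn (hf.sub continuousOn_const)) :
        ContinuousOn (fun t => Complex.abs (f t - z)) (Icc a b))
    have hmin : ∀ t ∈ Icc a b, Complex.abs (f t0 - z) ≤ Complex.abs (f t - z) :=
      fun t ht => hmin0 ht
    set m := Complex.abs (f t0 - z) with hm
    have hmpos : 0 < m := by
      rw [hm]
      simpa [Complex.abs.pos_iff, sub_eq_zero] using hz t0 ht0
    refine ⟨m, hmpos, fun w hw => ?_⟩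
    have hwz : Complex.abs (w - z) < m := by rwa [Complex.dist_eq] at hw
    have hfw : ∀ t ∈ Icc a b, f t ≠ w := by
      intro t ht h0
      have : Complex.abs (f t - z) < m := by
        rw [h0]; exact hwz
      exact absurd this (not_lt.mpr (hmin t ht))
    refine ⟨hfw, ?_⟩
    exact wind_sub_eq hab hf hloop (fun t ht => lt_of_lt_of_le hwz (hmin t ht))
  -- clopen argument
  set U := {z : ℂ | (∀ t ∈ Icc a b, f t ≠ z) ∧ W z = W x} with hU
  set V := {z : ℂ | (∀ t ∈ Icc a b, f t ≠ z) ∧ W z ≠ W x} with hV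
  have hUo : IsOpen U := by
    rw [Metric.isOpen_iff]
    intro z hz
    obtain ⟨ε, hεpos, hε⟩ := hloc z hz.1
    exact ⟨ε, hεpos, fun w hw => by
      have := hε w (mem_ball.mp hw)
      exact ⟨this.1, this.2.trans hz.2⟩⟩
  have hVo : IsOpen V := by
    rw [Metric.isOpen_iff]
    intro z hz
    obtain ⟨ε, hεpos, hε⟩ := hloc z hz.1
    exact ⟨ε, hεpos, fun w hw => by
      have := hε w (mem_ball.mp hw)
      exact ⟨this.1, this.2 ▸ hz.2⟩⟩
  have hKsub : K ⊆ U ∪ V := by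
    intro z hz
    by_cases h : W z = W x
    · exact Or.inl ⟨hdisj z hz, h⟩
    · exact Or.inr ⟨hdisj z hz, h⟩
  by_contra hne
  have hyV : y ∈ V := ⟨hdisj y hy, fun h => hne h.symm⟩
  have hxU : x ∈ U := ⟨hdisj x hx, rfl⟩
  obtain ⟨z, hz⟩ := hK U V hUo hVo hKsub ⟨x, hx, hxU⟩ ⟨y, hy, hyV⟩
  exact hz.2.2.2 hz.2.1.2

lemma wind_zero_far {f : ℝ → ℂ} {a b : ℝ} (hab : a ≤ b) (hf : ContinuousOn f (Icc a b))
    (hloop : f b = f a) {x : ℂ} {R : ℝ} (hR : ∀ t ∈ Icc a b, Complex.abs (f t) ≤ R)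
    (hx : R < Complex.abs x) : wind (fun t => f t - x) a b = 0 := by
  have hx0 : x ≠ 0 := by
    intro h; rw [h] at hx; simp at hx
    exact absurd (le_trans (Complex.abs.nonneg _) (hR a ⟨le_rfl, hab⟩)) (not_le.mpr hx)
  have hslit : ∀ t ∈ Icc a b, (f t - x) / (-x) ∈ Complex.slitPlane := by
    intro t ht
    apply near_one_slit' (neg_ne_zero.mpr hx0)
    have : f t - x - (-x) = f t := by ring
    rw [this, Complex.abs.map_neg]
    exact lt_of_le_of_lt (hR t ht) hx
  set L : ℝ → ℂ := fun t => Complex.log (-x) + Complex.log ((f t - x) / (-x)) with hL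
  have hLc : ContinuousOn L (Icc a b) := by
    apply continuousOn_const.add
    apply ContinuousOn.clog
    · exact (hf.sub continuousOn_const).div_const _
    · exact hslit
  have hLe : ∀ t ∈ Icc a b, Complex.exp (L t) = f t - x := by
    intro t ht
    rw [hL]
    simp only []
    rw [Complex.exp_add, Complex.exp_log (neg_ne_zero.mpr hx0),
      Complex.exp_log (Complex.slitPlane_ne_zero (hslit t ht))]
    field_simp
  rw [wind_eq hab hLc hLe]
  simp only [hL]
  rw [hloop]
  ring

/-- winding of the circle of radius 2 around any interior point is 2πi -/
lemma wind_cir {α : ℝ} {x : ℂ} (hx : Complex.abs x < 2) :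
    wind (fun θ => 2 * Complex.exp (θ * I) - x) α (α + 2 * Real.pi) = 2 * Real.pi * I := by
  have hπ := Real.pi_pos
  have hab : α ≤ α + 2 * Real.pi := by linarith
  have hcont : ContinuousOn (fun θ : ℝ => 2 * Complex.exp (θ * I)) (Icc α (α + 2*Real.pi)) := by
    apply Continuous.continuousOn
    exact continuous_const.mul (Complex.continuous_exp.comp
      ((Complex.continuous_ofReal).mul continuous_const))
  have habs : ∀ θ : ℝ, Complex.abs (2 * Complex.exp (θ * I)) = 2 := by
    intro θ
    rw [map_mul, Complex.abs_exp_ofReal_mul_I]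
    simp
  have hloop : (fun θ : ℝ => 2 * Complex.exp (θ * I)) (α + 2*Real.pi) =
      (fun θ : ℝ => 2 * Complex.exp (θ * I)) α := by
    simp only []
    rw [show ((α + 2*Real.pi : ℝ) : ℂ) * I = (α : ℝ) * I + 2*Real.pi*I by push_cast; ring]
    rw [Complex.exp_add, Complex.exp_two_pi_mul_I, mul_one]
  have hzero : wind (fun θ => 2 * Complex.exp (θ * I) - 0) α (α + 2*Real.pi) =
      2 * Real.pi * I := by
    set L : ℝ → ℂ := fun θ => Complex.log 2 + θ * I with hL
    have hLc : ContinuousOn L (Icc α (α + 2*Real.pi)) :=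
      continuousOn_const.add ((Complex.continuous_ofReal.mul continuous_const).continuousOn)
    have hLe : ∀ θ ∈ Icc α (α + 2*Real.pi), Complex.exp (L θ) = 2 * Complex.exp (θ*I) - 0 := by
      intro θ hθ
      rw [hL]
      simp only []
      rw [Complex.exp_add, Complex.exp_log (by norm_num : (2:ℂ) ≠ 0), sub_zero]
    rw [wind_eq hab hLc hLe]
    simp only [hL]
    push_cast
    ring
  have hconst := wind_const hab hcont hloop (convex_ball (0:ℂ) 2).isPreconnected
    (fun z hz θ hθ h0 => by
      rw [mem_ball_zero_iff] at hz
      rw [← h0] at hz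
      rw [show ‖2 * Complex.exp ((θ:ℝ) * I)‖ = Complex.abs (2*Complex.exp ((θ:ℝ)*I)) from rfl,
        habs] at hz
      exact lt_irrefl _ hz)
    (show (0:ℂ) ∈ ball (0:ℂ) 2 by simp)
    (show x ∈ ball (0:ℂ) 2 by rwa [mem_ball_zero_iff])
  rw [← hconst]
  exact hzero


/-- The loop: path `F` on `[0,1]` from `a₀ = exp(αI)` to `c₀ = exp(κI)`, radial out to `2c₀`
on `[1,2]`, along the circle of radius 2 from angle `κ` to angle `ω` on `[2,3]`, radially
back in to `exp(αI)` on `[3,4]`. -/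
def Γ (F : ℝ → ℂ) (κ ω α : ℝ) (t : ℝ) : ℂ :=
  if t ≤ 1 then F t
  else if t ≤ 2 then (t : ℂ) * Complex.exp ((κ : ℂ) * I)
  else if t ≤ 3 then 2 * Complex.exp (((κ + (t - 2) * (ω - κ) : ℝ) : ℂ) * I)
  else ((5 : ℂ) - (t : ℂ)) * Complex.exp ((α : ℂ) * I)

variable {F : ℝ → ℂ} {κ ω α : ℝ}

lemma Γ_cont (hF : Continuous F) (hF1 : F 1 = Complex.exp ((κ:ℂ) * I))
    (hωα : Complex.exp ((ω:ℂ) * I) = Complex.exp ((α:ℂ) * I)) :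
    Continuous (Γ F κ ω α) := by
  have harc : Continuous fun t : ℝ => 2 * Complex.exp (((κ + (t - 2) * (ω - κ) : ℝ) : ℂ) * I) := by
    apply continuous_const.mul
    apply Complex.continuous_exp.comp
    apply Continuous.mul _ continuous_const
    exact Complex.continuous_ofReal.comp (by continuity)
  have hlin4 : Continuous fun t : ℝ => ((5 : ℂ) - (t : ℂ)) * Complex.exp ((α:ℂ) * I) := by
    apply Continuous.mul _ continuous_const
    exact continuous_const.sub Complex.continuous_ofReal
  have hlin2 : Continuous fun t : ℝ => (t : ℂ) * Complex.exp ((κ:ℂ) * I) :=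
    Complex.continuous_ofReal.mul continuous_const
  have h3 : Continuous fun t : ℝ =>
      if t ≤ 3 then 2 * Complex.exp (((κ + (t - 2) * (ω - κ) : ℝ) : ℂ) * I)
      else ((5 : ℂ) - (t : ℂ)) * Complex.exp ((α:ℂ) * I) := by
    apply Continuous.if_le harc hlin4 continuous_id continuous_const
    intro t ht
    simp only [id] at ht
    subst ht
    norm_num
    exact hωα
  have h2 : Continuous fun t : ℝ =>
      if t ≤ 2 then (t : ℂ) * Complex.exp ((κ:ℂ) * I)
      else if t ≤ 3 then 2 * Complex.exp (((κ + (t - 2) * (ω - κ) : ℝ) : ℂ) * I)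
      else ((5 : ℂ) - (t : ℂ)) * Complex.exp ((α:ℂ) * I) := by
    apply Continuous.if_le hlin2 h3 continuous_id continuous_const
    intro t ht
    simp only [id] at ht
    subst ht
    rw [if_pos (by norm_num : (2:ℝ) ≤ 3)]
    norm_num
  apply Continuous.if_le hF h2 continuous_id continuous_const
  intro t ht
  simp only [id] at ht
  subst ht
  rw [hF1, if_pos (by norm_num : (1:ℝ) ≤ 2)]
  norm_num

lemma Γ_eq1 {t : ℝ} (ht : t ∈ Icc (0:ℝ) 1) : Γ F κ ω α t = F t := if_pos ht.2

lemma Γ_eq2 (hF1 : F 1 = Complex.exp ((κ:ℂ) * I)) {t : ℝ} (ht : t ∈ Icc (1:ℝ) 2) :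
    Γ F κ ω α t = (t : ℂ) * Complex.exp ((κ:ℂ) * I) := by
  unfold Γ
  by_cases h1 : t ≤ 1
  · have : t = 1 := le_antisymm h1 ht.1
    subst this
    rw [if_pos le_rfl, hF1]
    norm_num
  · rw [if_neg h1, if_pos ht.2]

lemma Γ_eq3 {t : ℝ} (ht : t ∈ Icc (2:ℝ) 3) :
    Γ F κ ω α t = 2 * Complex.exp (((κ + (t - 2) * (ω - κ) : ℝ) : ℂ) * I) := by
  unfold Γ
  have h1 : ¬ t ≤ 1 := by linarith [ht.1]
  by_cases h2 : t ≤ 2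
  · have : t = 2 := le_antisymm h2 ht.1
    subst this
    rw [if_neg h1, if_pos le_rfl]
    norm_num
  · rw [if_neg h1, if_neg h2, if_pos ht.2]

lemma Γ_eq4 (hωα : Complex.exp ((ω:ℂ) * I) = Complex.exp ((α:ℂ) * I)) {t : ℝ}
    (ht : t ∈ Icc (3:ℝ) 4) :
    Γ F κ ω α t = ((5 : ℂ) - (t : ℂ)) * Complex.exp ((α:ℂ) * I) := by
  unfold Γ
  have h1 : ¬ t ≤ 1 := by linarith [ht.1]
  have h2 : ¬ t ≤ 2 := by linarith [ht.1]
  by_cases h3 : t ≤ 3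
  · have : t = 3 := le_antisymm h3 ht.1
    subst this
    rw [if_neg h1, if_neg h2, if_pos le_rfl]
    rw [show ((κ + (3 - 2) * (ω - κ) : ℝ) : ℂ) = (ω : ℂ) by push_cast; ring, hωα]
    norm_num
  · rw [if_neg h1, if_neg h2, if_neg h3]

lemma Γ_zero : Γ F κ ω α 0 = F 0 := if_pos (by norm_num)

lemma Γ_four : Γ F κ ω α 4 = Complex.exp ((α:ℂ) * I) := by
  unfold Γ
  rw [if_neg (by norm_num), if_neg (by norm_num), if_neg (by norm_num)]
  norm_num

lemma Γ_cases {t : ℝ} (ht : t ∈ Icc (0:ℝ) 4) :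
    t ∈ Icc (0:ℝ) 1 ∨ t ∈ Icc (1:ℝ) 2 ∨ t ∈ Icc (2:ℝ) 3 ∨ t ∈ Icc (3:ℝ) 4 := by
  rcases le_or_gt t 1 with h | h
  · exact Or.inl ⟨ht.1, h⟩
  rcases le_or_gt t 2 with h2 | h2
  · exact Or.inr (Or.inl ⟨h.le, h2⟩)
  rcases le_or_gt t 3 with h3 | h3
  · exact Or.inr (Or.inr (Or.inl ⟨h2.le, h3⟩))
  · exact Or.inr (Or.inr (Or.inr ⟨h3.le, ht.2⟩))

lemma Γ_ne (hF1 : F 1 = Complex.exp ((κ:ℂ) * I))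
    (hωα : Complex.exp ((ω:ℂ) * I) = Complex.exp ((α:ℂ) * I)) {x : ℂ}
    (h1 : ∀ t ∈ Icc (0:ℝ) 1, F t ≠ x)
    (h2 : ∀ s ∈ Icc (1:ℝ) 2, (s : ℂ) * Complex.exp ((κ:ℂ) * I) ≠ x)
    (h3 : ∀ t ∈ Icc (2:ℝ) 3, 2 * Complex.exp (((κ + (t - 2) * (ω - κ) : ℝ) : ℂ) * I) ≠ x)
    (h4 : ∀ s ∈ Icc (1:ℝ) 2, (s : ℂ) * Complex.exp ((α:ℂ) * I) ≠ x) :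
    ∀ t ∈ Icc (0:ℝ) 4, Γ F κ ω α t ≠ x := by
  intro t ht
  rcases Γ_cases ht with h | h | h | h
  · rw [Γ_eq1 h]; exact h1 t h
  · rw [Γ_eq2 hF1 h]; exact h2 t h
  · rw [Γ_eq3 h]; exact h3 t h
  · rw [Γ_eq4 hωα h]
    have h5 : ((5:ℂ) - (t:ℂ)) = ((5 - t : ℝ) : ℂ) := by push_cast; ring
    rw [h5]
    exact h4 (5 - t) ⟨by linarith [h.2], by linarith [h.1]⟩

lemma Γ_bound (hF1 : F 1 = Complex.exp ((κ:ℂ) * I))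
    (hωα : Complex.exp ((ω:ℂ) * I) = Complex.exp ((α:ℂ) * I))
    (hFb : ∀ t ∈ Icc (0:ℝ) 1, Complex.abs (F t) ≤ 1) :
    ∀ t ∈ Icc (0:ℝ) 4, Complex.abs (Γ F κ ω α t) ≤ 2 := by
  have habs : ∀ θ : ℝ, Complex.abs (Complex.exp ((θ:ℂ) * I)) = 1 := fun θ =>
    Complex.abs_exp_ofReal_mul_I θ
  intro t ht
  rcases Γ_cases ht with h | h | h | h
  · rw [Γ_eq1 h]; linarith [hFb t h]
  · rw [Γ_eq2 hF1 h, map_mul, habs, Complex.abs_ofReal, mul_one,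
      _root_.abs_of_nonneg (by linarith [h.1] : (0:ℝ) ≤ t)]
    linarith [h.2]
  · rw [Γ_eq3 h, map_mul, habs]
    norm_num
  · rw [Γ_eq4 hωα h, map_mul, habs]
    have h5 : ((5:ℂ) - (t:ℂ)) = ((5 - t : ℝ) : ℂ) := by push_cast; ring
    rw [h5, Complex.abs_ofReal, mul_one,
      _root_.abs_of_nonneg (by linarith [h.2] : (0:ℝ) ≤ 5 - t)]
    linarith [h.1]


/-- retraction of the plane onto the closed unit disc -/
def ρ (z : ℂ) : ℂ := (((max 1 (Complex.abs z))⁻¹ : ℝ) : ℂ) * z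

lemma max_pos' (z : ℂ) : (0:ℝ) < max 1 (Complex.abs z) :=
  lt_of_lt_of_le zero_lt_one (le_max_left _ _)

lemma ρ_cont : Continuous ρ := by
  apply Continuous.mul _ continuous_id
  apply Complex.continuous_ofReal.comp
  apply Continuous.inv₀ (continuous_const.max Complex.continuous_abs)
  exact fun x => (max_pos' x).ne'

lemma ρ_mem (z : ℂ) : ρ z ∈ closedBall (0:ℂ) 1 := by
  rw [mem_closedBall_zero_iff]
  show Complex.abs (ρ z) ≤ 1
  rw [ρ, map_mul, Complex.abs_ofReal, _root_.abs_of_pos (inv_pos.mpr (max_pos' z))]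
  rw [inv_mul_le_iff₀ (max_pos' z), mul_one]
  exact le_max_right _ _

lemma ρ_fix {z : ℂ} (hz : z ∈ closedBall (0:ℂ) 1) : ρ z = z := by
  rw [mem_closedBall_zero_iff] at hz
  have : max 1 (Complex.abs z) = 1 := max_eq_left hz
  rw [ρ, this]
  norm_num

lemma exp_sphere (θ : ℝ) : Complex.exp ((θ:ℂ) * I) ∈ sphere (0:ℂ) 1 := by
  rw [mem_sphere_zero_iff_norm]
  exact Complex.abs_exp_ofReal_mul_I θ

lemma exists_arc_point {B : Set ℂ} {s e : ℝ} (hse : s < e)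
    (hs : Complex.exp ((s:ℂ)*I) ∉ B) (he : Complex.exp ((e:ℂ)*I) ∉ B)
    (hsep : connectedComponentIn (sphere (0:ℂ) 1 \ B) (Complex.exp ((s:ℂ)*I)) ≠
      connectedComponentIn (sphere (0:ℂ) 1 \ B) (Complex.exp ((e:ℂ)*I))) :
    ∃ θ ∈ Ioo s e, Complex.exp ((θ:ℂ)*I) ∈ B := by
  by_contra hcon
  push_neg at hcon
  have harcB : ∀ θ ∈ Icc s e, Complex.exp ((θ:ℂ)*I) ∉ B := by
    intro θ hθ
    rcases eq_or_lt_of_le hθ.1 with h | h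
    · rw [← h]; exact hs
    rcases eq_or_lt_of_le hθ.2 with h2 | h2
    · rw [h2]; exact he
    · exact hcon θ ⟨h, h2⟩
  have harc_sub : (fun θ : ℝ => Complex.exp ((θ:ℂ)*I)) '' Icc s e ⊆ sphere (0:ℂ) 1 \ B := by
    rintro z ⟨θ, hθ, rfl⟩
    exact ⟨exp_sphere θ, harcB θ hθ⟩
  have harc_conn : IsPreconnected ((fun θ : ℝ => Complex.exp ((θ:ℂ)*I)) '' Icc s e) := by
    apply isPreconnected_Icc.image
    apply Continuous.continuousOn
    exact Complex.continuous_exp.comp ((Complex.continuous_ofReal).mul continuous_const)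
  have hmem_s : Complex.exp ((s:ℂ)*I) ∈ (fun θ : ℝ => Complex.exp ((θ:ℂ)*I)) '' Icc s e :=
    ⟨s, ⟨le_rfl, hse.le⟩, rfl⟩
  have hmem_e : Complex.exp ((e:ℂ)*I) ∈ (fun θ : ℝ => Complex.exp ((θ:ℂ)*I)) '' Icc s e :=
    ⟨e, ⟨hse.le, le_rfl⟩, rfl⟩
  have hsub := harc_conn.subset_connectedComponentIn hmem_s harc_sub
  exact hsep (connectedComponentIn_eq (hsub hmem_e))

lemma rad_ne_rad {u s μ θ : ℝ} (hu : 0 < u) (hs : 0 < s) (hne : μ ≠ θ)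
    (hlt : |μ - θ| < 2*Real.pi) :
    (u:ℂ) * Complex.exp ((μ:ℂ)*I) ≠ (s:ℂ) * Complex.exp ((θ:ℂ)*I) := by
  intro h
  have habs : u = s := by
    have h2 := congrArg Complex.abs h
    rwa [map_mul, map_mul, Complex.abs_exp_ofReal_mul_I, Complex.abs_exp_ofReal_mul_I,
      mul_one, mul_one, Complex.abs_ofReal, Complex.abs_ofReal,
      _root_.abs_of_pos hu, _root_.abs_of_pos hs] at h2
  subst habs
  have hcan : Complex.exp ((μ:ℂ)*I) = Complex.exp ((θ:ℂ)*I) :=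
    mul_left_cancel₀ (by exact_mod_cast hu.ne' : (u:ℂ) ≠ 0) h
  exact not_exp_eq hne hlt hcan

lemma wind_restrict {f L : ℝ → ℂ} {a b a' b' : ℝ} (h1 : a ≤ a') (h2 : a' ≤ b') (h3 : b' ≤ b)
    (hLc : ContinuousOn L (Icc a b)) (hLe : ∀ t ∈ Icc a b, Complex.exp (L t) = f t) :
    wind f a' b' = L b' - L a' :=
  wind_eq h2 (hLc.mono (Icc_subset_Icc h1 h3)) (fun t ht => hLe t ⟨h1.trans ht.1, ht.2.trans h3⟩)

set_option maxHeartbeats 1000000 in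
theorem key {B : Set ℂ} (hBd : B ⊆ closedBall (0:ℂ) 1) (hBcl : IsClosed B)
    (hBco : IsPreconnected B) {a₀ c₀ : ℂ}
    (ha₀ : a₀ ∈ sphere (0:ℂ) 1) (hc₀ : c₀ ∈ sphere (0:ℂ) 1)
    (ha₀B : a₀ ∉ B) (hc₀B : c₀ ∉ B) (hane : a₀ ≠ c₀)
    (hsep : connectedComponentIn (sphere (0:ℂ) 1 \ B) a₀ ≠
      connectedComponentIn (sphere (0:ℂ) 1 \ B) c₀) :
    c₀ ∉ connectedComponentIn (closedBall (0:ℂ) 1 \ B) a₀ := by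
  intro hco
  have hπ := Real.pi_pos
  have habs_a : Complex.abs a₀ = 1 := mem_sphere_zero_iff_norm.mp ha₀
  have habs_c : Complex.abs c₀ = 1 := mem_sphere_zero_iff_norm.mp hc₀
  set α := a₀.arg with hαdef
  have ha₀exp : Complex.exp ((α:ℂ) * I) = a₀ := by
    have h := Complex.abs_mul_exp_arg_mul_I a₀
    rw [habs_a] at h
    simpa using h
  set κ₀ := c₀.arg with hκ₀def
  have hc₀exp0 : Complex.exp ((κ₀:ℂ) * I) = c₀ := by
    have h := Complex.abs_mul_exp_arg_mul_I c₀
    rw [habs_c] at h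
    simpa using h
  have hκ₀α : κ₀ ≠ α := fun h => hane (by rw [← ha₀exp, ← hc₀exp0, h])
  have h2πshift : ∀ x : ℝ, Complex.exp (((x + 2*Real.pi : ℝ):ℂ) * I) = Complex.exp ((x:ℂ) * I) := by
    intro x
    rw [show (((x + 2*Real.pi : ℝ)):ℂ) * I = (x:ℂ)*I + 2*Real.pi*I by push_cast; ring,
      Complex.exp_add, Complex.exp_two_pi_mul_I, mul_one]
  set κ := if α < κ₀ then κ₀ else κ₀ + 2*Real.pi with hκdef
  have hκexp : Complex.exp ((κ:ℂ) * I) = c₀ := by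
    rw [hκdef]
    split
    · exact hc₀exp0
    · rw [h2πshift κ₀]; exact hc₀exp0
  have harg1 := Complex.neg_pi_lt_arg a₀
  have harg2 := Complex.arg_le_pi a₀
  have harg3 := Complex.neg_pi_lt_arg c₀
  have harg4 := Complex.arg_le_pi c₀
  have hακ1 : α < κ := by
    rw [hκdef]; split
    · assumption
    · rename_i h
      push_neg at h
      have : κ₀ < α := lt_of_le_of_ne h hκ₀α
      linarith
  have hακ2 : κ < α + 2*Real.pi := by
    rw [hκdef]; split
    · linarith
    · rename_i h
      push_neg at h
      have : κ₀ < α := lt_of_le_of_ne h hκ₀α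
      linarith
  -- the open thickening and a path from a₀ to c₀ in the disc avoiding B
  have hΩopen : IsOpen (ρ ⁻¹' Bᶜ ∩ ball (0:ℂ) 2) := (hBcl.isOpen_compl.preimage ρ_cont).inter isOpen_ball
  have hsubΩ : closedBall (0:ℂ) 1 \ B ⊆ ρ ⁻¹' Bᶜ ∩ ball (0:ℂ) 2 := by
    intro z hz
    constructor
    · show ρ z ∈ Bᶜ
      rw [ρ_fix hz.1]
      exact hz.2
    · exact mem_ball_zero_iff.mpr (lt_of_le_of_lt (mem_closedBall_zero_iff.mp hz.1) one_lt_two)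
  have hρΩ : ∀ z ∈ ρ ⁻¹' Bᶜ ∩ ball (0:ℂ) 2, ρ z ∈ closedBall (0:ℂ) 1 \ B :=
    fun z hz => ⟨ρ_mem z, hz.1⟩
  have ha₀D : a₀ ∈ closedBall (0:ℂ) 1 \ B := ⟨sphere_subset_closedBall ha₀, ha₀B⟩
  have ha₀Ω : a₀ ∈ ρ ⁻¹' Bᶜ ∩ ball (0:ℂ) 2 := hsubΩ ha₀D
  have hUopen : IsOpen (connectedComponentIn (ρ ⁻¹' Bᶜ ∩ ball (0:ℂ) 2) a₀) :=
    hΩopen.connectedComponentIn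
  have hc₀U : c₀ ∈ connectedComponentIn (ρ ⁻¹' Bᶜ ∩ ball (0:ℂ) 2) a₀ :=
    connectedComponentIn_mono a₀ hsubΩ hco
  have ha₀U : a₀ ∈ connectedComponentIn (ρ ⁻¹' Bᶜ ∩ ball (0:ℂ) 2) a₀ :=
    mem_connectedComponentIn ha₀Ω
  have hUconn : IsConnected (connectedComponentIn (ρ ⁻¹' Bᶜ ∩ ball (0:ℂ) 2) a₀) :=
    (isConnected_connectedComponentIn_iff).mpr ha₀Ω
  have hUpath : IsPathConnected (connectedComponentIn (ρ ⁻¹' Bᶜ ∩ ball (0:ℂ) 2) a₀) :=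
    (hUopen.isConnected_iff_isPathConnected).mp hUconn
  obtain ⟨γ, hγ⟩ := hUpath.joinedIn a₀ ha₀U c₀ hc₀U
  set F : ℝ → ℂ := fun t => ρ (γ.extend t) with hFdef
  have hFcont : Continuous F := ρ_cont.comp γ.continuous_extend
  have hFD : ∀ t ∈ Icc (0:ℝ) 1, F t ∈ closedBall (0:ℂ) 1 \ B := by
    intro t ht
    show ρ (γ.extend t) ∈ _
    rw [γ.extend_apply ht]
    exact hρΩ _ (connectedComponentIn_subset _ _ (hγ ⟨t, ht⟩))
  have hF0 : F 0 = a₀ := by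
    show ρ (γ.extend 0) = a₀
    rw [γ.extend_zero]
    exact ρ_fix (sphere_subset_closedBall ha₀)
  have hF1 : F 1 = Complex.exp ((κ:ℂ) * I) := by
    show ρ (γ.extend 1) = _
    rw [γ.extend_one, hκexp]
    exact ρ_fix (sphere_subset_closedBall hc₀)
  have hFb : ∀ t ∈ Icc (0:ℝ) 1, Complex.abs (F t) ≤ 1 := fun t ht =>
    mem_closedBall_zero_iff.mp (hFD t ht).1
  -- points of B on both arcs
  obtain ⟨β, hβIoo, hpB⟩ := exists_arc_point hακ1 (by rw [ha₀exp]; exact ha₀B)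
    (by rw [hκexp]; exact hc₀B) (by rw [ha₀exp, hκexp]; exact hsep)
  obtain ⟨δ, hδIoo, hqB⟩ := exists_arc_point hακ2 (by rw [hκexp]; exact hc₀B)
    (by rw [h2πshift α, ha₀exp]; exact ha₀B)
    (by rw [h2πshift α, hκexp, ha₀exp]; exact hsep.symm)
  have habs_p : Complex.abs (Complex.exp ((β:ℂ)*I)) = 1 := Complex.abs_exp_ofReal_mul_I β
  have habs_q : Complex.abs (Complex.exp ((δ:ℂ)*I)) = 1 := Complex.abs_exp_ofReal_mul_I δ
  have hω2 : Complex.exp (((α + 2*Real.pi : ℝ):ℂ) * I) = Complex.exp ((α:ℂ) * I) := h2πshift α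
  have hω1 : Complex.exp ((α:ℂ) * I) = Complex.exp ((α:ℂ) * I) := rfl
  have hΓ₁cont : Continuous (Γ F κ α α) := Γ_cont hFcont hF1 hω1
  have hΓ₂cont : Continuous (Γ F κ (α + 2*Real.pi) α) := Γ_cont hFcont hF1 hω2
  have hΓ₁loop : Γ F κ α α 4 = Γ F κ α α 0 := by rw [Γ_four, Γ_zero, hF0, ha₀exp]
  have hΓ₂loop : Γ F κ (α + 2*Real.pi) α 4 = Γ F κ (α + 2*Real.pi) α 0 := by
    rw [Γ_four, Γ_zero, hF0, ha₀exp]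
  have h04 : (0:ℝ) ≤ 4 := by norm_num
  have h2cast : ((2:ℝ):ℂ) = (2:ℂ) := by norm_num
  -- B avoids both loops
  have hBavoid : ∀ ω : ℝ, Complex.exp ((ω:ℂ)*I) = Complex.exp ((α:ℂ)*I) →
      ∀ x ∈ B, ∀ t ∈ Icc (0:ℝ) 4, Γ F κ ω α t ≠ x := by
    intro ω hω x hx
    have hxd : Complex.abs x ≤ 1 := mem_closedBall_zero_iff.mp (hBd hx)
    apply Γ_ne hF1 hω
    · exact fun t ht hEq => (hFD t ht).2 (hEq ▸ hx)
    · intro s hs hEq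
      have habs : s = Complex.abs x := by
        rw [← hEq, map_mul, Complex.abs_exp_ofReal_mul_I, mul_one, Complex.abs_ofReal,
          _root_.abs_of_pos (by linarith [hs.1] : (0:ℝ) < s)]
      have hs1 : s = 1 := le_antisymm (by rw [habs]; exact hxd) hs.1
      rw [hs1] at hEq
      apply hc₀B
      rw [← hκexp]
      have h1 : Complex.exp ((κ:ℂ)*I) = x := by rw [← hEq]; norm_num
      rwa [h1]
    · intro t ht hEq
      have : Complex.abs x = 2 := by
        rw [← hEq, map_mul, Complex.abs_exp_ofReal_mul_I, mul_one]
        norm_num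
      linarith
    · intro s hs hEq
      have habs : s = Complex.abs x := by
        rw [← hEq, map_mul, Complex.abs_exp_ofReal_mul_I, mul_one, Complex.abs_ofReal,
          _root_.abs_of_pos (by linarith [hs.1] : (0:ℝ) < s)]
      have hs1 : s = 1 := le_antisymm (by rw [habs]; exact hxd) hs.1
      rw [hs1] at hEq
      apply ha₀B
      rw [← ha₀exp]
      have h1 : Complex.exp ((α:ℂ)*I) = x := by rw [← hEq]; norm_num
      rwa [h1]
  -- the ray through q misses the loop over the first arc
  have hrayq : ∀ s ∈ Icc (1:ℝ) 20, ∀ t ∈ Icc (0:ℝ) 4,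
      Γ F κ α α t ≠ (s:ℂ) * Complex.exp ((δ:ℂ)*I) := by
    intro s hs
    have hspos : (0:ℝ) < s := by linarith [hs.1]
    apply Γ_ne hF1 hω1
    · intro t ht hEq
      have hab : Complex.abs (F t) = s := by
        rw [hEq, map_mul, Complex.abs_ofReal, habs_q, mul_one, _root_.abs_of_pos hspos]
      have hs1 : s = 1 := le_antisymm (hab ▸ hFb t ht) hs.1
      rw [hs1] at hEq
      apply (hFD t ht).2
      rw [show F t = ((1:ℝ):ℂ) * Complex.exp ((δ:ℂ)*I) from hEq]
      simpa using hqB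
    · intro u hu
      exact rad_ne_rad (by linarith [hu.1]) hspos
        (show κ ≠ δ from fun h => absurd hδIoo.1 (by rw [h]; exact lt_irrefl δ))
        (by rw [abs_sub_lt_iff]; constructor <;> nlinarith [hδIoo.1, hδIoo.2, hακ1, hακ2, hπ, hβIoo.1, hβIoo.2])
    · intro t ht hEq
      have hθ1 : α ≤ κ + (t - 2) * (α - κ) := by nlinarith [ht.1, ht.2, hακ1, hακ2, hπ]
      have hθ2 : κ + (t - 2) * (α - κ) ≤ κ := by nlinarith [ht.1, ht.2, hακ1, hακ2, hπ]
      refine rad_ne_rad (show (0:ℝ) < 2 by norm_num) hspos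
        (show κ + (t - 2) * (α - κ) ≠ δ from fun h => by nlinarith [hδIoo.1, hθ1, hθ2, hακ1, hακ2, hπ])
        (by rw [abs_sub_lt_iff]; constructor <;> nlinarith [hδIoo.1, hδIoo.2, hακ1, hακ2, hπ, hβIoo.1, hβIoo.2]) ?_
      rw [h2cast]
      exact hEq
    · intro u hu
      exact rad_ne_rad (by linarith [hu.1]) hspos
        (show α ≠ δ from fun h => by nlinarith [hδIoo.1, hβIoo.1, hβIoo.2, hακ1, hακ2, hπ])
        (by rw [abs_sub_lt_iff]; constructor <;> nlinarith [hδIoo.1, hδIoo.2, hακ1, hακ2, hπ, hβIoo.1, hβIoo.2])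
  -- the ray through p misses the loop over the second arc
  have hrayp : ∀ s ∈ Icc (1:ℝ) 20, ∀ t ∈ Icc (0:ℝ) 4,
      Γ F κ (α + 2*Real.pi) α t ≠ (s:ℂ) * Complex.exp ((β:ℂ)*I) := by
    intro s hs
    have hspos : (0:ℝ) < s := by linarith [hs.1]
    apply Γ_ne hF1 hω2
    · intro t ht hEq
      have hab : Complex.abs (F t) = s := by
        rw [hEq, map_mul, Complex.abs_ofReal, habs_p, mul_one, _root_.abs_of_pos hspos]
      have hs1 : s = 1 := le_antisymm (hab ▸ hFb t ht) hs.1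
      rw [hs1] at hEq
      apply (hFD t ht).2
      rw [show F t = ((1:ℝ):ℂ) * Complex.exp ((β:ℂ)*I) from hEq]
      simpa using hpB
    · intro u hu
      exact rad_ne_rad (by linarith [hu.1]) hspos
        (show κ ≠ β from fun h => absurd hβIoo.2 (by rw [h]; exact lt_irrefl _))
        (by rw [abs_sub_lt_iff]; constructor <;> nlinarith [hβIoo.1, hβIoo.2, hακ1, hακ2, hπ, hδIoo.1, hδIoo.2])
    · intro t ht hEq
      have hθ1 : κ ≤ κ + (t - 2) * ((α + 2*Real.pi) - κ) := by nlinarith [ht.1, ht.2, hακ1, hακ2, hπ]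
      have hθ2 : κ + (t - 2) * ((α + 2*Real.pi) - κ) ≤ α + 2*Real.pi := by
        nlinarith [ht.1, ht.2, hακ1, hακ2, hπ]
      refine rad_ne_rad (show (0:ℝ) < 2 by norm_num) hspos
        (show κ + (t - 2) * ((α + 2*Real.pi) - κ) ≠ β from fun h => by nlinarith [hβIoo.2, hθ1, hθ2, hακ1, hακ2, hπ])
        (by rw [abs_sub_lt_iff]; constructor <;> nlinarith [hβIoo.1, hβIoo.2, hακ1, hακ2, hπ, hδIoo.1, hδIoo.2]) ?_
      rw [h2cast]
      exact hEq
    · intro u hu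
      exact rad_ne_rad (by linarith [hu.1]) hspos
        (show α ≠ β from fun h => by nlinarith [hβIoo.1])
        (by rw [abs_sub_lt_iff]; constructor <;> nlinarith [hβIoo.1, hβIoo.2, hακ1, hακ2, hπ, hδIoo.1, hδIoo.2])
  -- lifts of the two loops relative to p
  have hone20 : (1:ℝ) ∈ Icc (1:ℝ) 20 := ⟨le_rfl, by norm_num⟩
  have hΓ₂p : ∀ t ∈ Icc (0:ℝ) 4, Γ F κ (α + 2*Real.pi) α t ≠ Complex.exp ((β:ℂ)*I) := by
    intro t ht h
    apply hrayp 1 hone20 t ht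
    rw [h]
    norm_num
  obtain ⟨L₁, hL₁c, hL₁e⟩ := exists_lift
    ((hΓ₁cont.continuousOn).sub continuousOn_const :
      ContinuousOn (fun t => Γ F κ α α t - Complex.exp ((β:ℂ)*I)) (Icc 0 4))
    (fun t ht => sub_ne_zero.mpr (hBavoid α hω1 _ hpB t ht))
  obtain ⟨L₂, hL₂c, hL₂e⟩ := exists_lift
    (f := fun t => Γ F κ (α + 2*Real.pi) α t - Complex.exp ((β:ℂ)*I))
    ((hΓ₂cont.continuousOn).sub continuousOn_const :
      ContinuousOn (fun t => Γ F κ (α + 2*Real.pi) α t - Complex.exp ((β:ℂ)*I)) (Icc 0 4))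
    (fun t ht => sub_ne_zero.mpr (hΓ₂p t ht))
  obtain ⟨LC, hLCc, hLCe⟩ := exists_lift
    (f := fun θ : ℝ => 2 * Complex.exp ((θ:ℂ)*I) - Complex.exp ((β:ℂ)*I))
    (a := α) (b := α + 2*Real.pi)
    (Continuous.continuousOn (by
      apply Continuous.sub _ continuous_const
      exact continuous_const.mul (Complex.continuous_exp.comp
        ((Complex.continuous_ofReal).mul continuous_const))))
    (fun θ hθ => sub_ne_zero.mpr (fun h => by
      have := congrArg Complex.abs h
      rw [map_mul, Complex.abs_exp_ofReal_mul_I, Complex.abs_exp_ofReal_mul_I, mul_one] at this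
      norm_num at this))
  -- piece agreement between the two loops
  have hΓ02 : ∀ t ∈ Icc (0:ℝ) 2, Γ F κ (α + 2*Real.pi) α t = Γ F κ α α t := by
    intro t ht
    rcases le_or_gt t 1 with h | h
    · rw [Γ_eq1 ⟨ht.1, h⟩, Γ_eq1 ⟨ht.1, h⟩]
    · rw [Γ_eq2 hF1 ⟨h.le, ht.2⟩, Γ_eq2 hF1 ⟨h.le, ht.2⟩]
  have hΓ34 : ∀ t ∈ Icc (3:ℝ) 4, Γ F κ (α + 2*Real.pi) α t = Γ F κ α α t := by
    intro t ht
    rw [Γ_eq4 hω2 ht, Γ_eq4 hω1 ht]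
  -- wind computations
  have a1 : wind (fun t => Γ F κ α α t - Complex.exp ((β:ℂ)*I)) 0 2 = L₁ 2 - L₁ 0 :=
    wind_restrict (le_refl (0:ℝ)) (by norm_num) (by norm_num) hL₁c hL₁e
  have a2 : wind (fun t => Γ F κ α α t - Complex.exp ((β:ℂ)*I)) 0 2 = L₂ 2 - L₂ 0 := by
    apply wind_eq (by norm_num : (0:ℝ) ≤ 2)
      (hL₂c.mono (Icc_subset_Icc (le_refl (0:ℝ)) (by norm_num)))
    intro t ht
    have ht' : t ∈ Icc (0:ℝ) 4 := ⟨ht.1, ht.2.trans (by norm_num)⟩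
    rw [hL₂e t ht', hΓ02 t ht]
  have b1 : wind (fun t => Γ F κ α α t - Complex.exp ((β:ℂ)*I)) 3 4 = L₁ 4 - L₁ 3 :=
    wind_restrict (by norm_num) (by norm_num) (le_refl (4:ℝ)) hL₁c hL₁e
  have b2 : wind (fun t => Γ F κ α α t - Complex.exp ((β:ℂ)*I)) 3 4 = L₂ 4 - L₂ 3 := by
    apply wind_eq (by norm_num : (3:ℝ) ≤ 4)
      (hL₂c.mono (Icc_subset_Icc (by norm_num) (le_refl (4:ℝ))))
    intro t ht
    have ht' : t ∈ Icc (0:ℝ) 4 := ⟨(by norm_num : (0:ℝ) ≤ 3).trans ht.1, ht.2⟩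
    rw [hL₂e t ht', hΓ34 t ht]
  have hφcont : ∀ ω : ℝ, Continuous (fun t : ℝ => κ + (t - 2) * (ω - κ)) := fun ω =>
    continuous_const.add ((continuous_id.sub continuous_const).mul continuous_const)
  have hmaps₁ : ∀ t ∈ Icc (2:ℝ) 3, κ + (t - 2) * (α - κ) ∈ Icc α (α + 2*Real.pi) := by
    intro t ht
    constructor
    · nlinarith [ht.1, ht.2, hακ1, hακ2, hπ]
    · nlinarith [ht.1, ht.2, hακ1, hακ2, hπ]
  have hmaps₂ : ∀ t ∈ Icc (2:ℝ) 3, κ + (t - 2) * ((α + 2*Real.pi) - κ) ∈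
      Icc α (α + 2*Real.pi) := by
    intro t ht
    constructor
    · nlinarith [ht.1, ht.2, hακ1, hακ2, hπ]
    · nlinarith [ht.1, ht.2, hακ1, hακ2, hπ]
  have c1 : wind (fun t => Γ F κ α α t - Complex.exp ((β:ℂ)*I)) 2 3 = LC α - LC κ := by
    have hLc' : ContinuousOn (fun t : ℝ => LC (κ + (t - 2) * (α - κ))) (Icc 2 3) :=
      ContinuousOn.comp hLCc ((hφcont α).continuousOn) (fun t ht => hmaps₁ t ht)
    have hLe' : ∀ t ∈ Icc (2:ℝ) 3, Complex.exp (LC (κ + (t - 2) * (α - κ))) =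
        Γ F κ α α t - Complex.exp ((β:ℂ)*I) := by
      intro t ht
      rw [hLCe _ (hmaps₁ t ht), Γ_eq3 ht]
    have h := wind_eq (by norm_num : (2:ℝ) ≤ 3) hLc' hLe'
    rw [h, show κ + ((3:ℝ) - 2) * (α - κ) = α by ring, show κ + ((2:ℝ) - 2) * (α - κ) = κ by ring]
  have c1' : wind (fun t => Γ F κ α α t - Complex.exp ((β:ℂ)*I)) 2 3 = L₁ 3 - L₁ 2 :=
    wind_restrict (by norm_num) (by norm_num) (by norm_num) hL₁c hL₁e
  have c2 : wind (fun t => Γ F κ (α + 2*Real.pi) α t - Complex.exp ((β:ℂ)*I)) 2 3 =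
      LC (α + 2*Real.pi) - LC κ := by
    have hLc' : ContinuousOn (fun t : ℝ => LC (κ + (t - 2) * ((α + 2*Real.pi) - κ))) (Icc 2 3) :=
      ContinuousOn.comp hLCc ((hφcont (α + 2*Real.pi)).continuousOn) (fun t ht => hmaps₂ t ht)
    have hLe' : ∀ t ∈ Icc (2:ℝ) 3, Complex.exp (LC (κ + (t - 2) * ((α + 2*Real.pi) - κ))) =
        Γ F κ (α + 2*Real.pi) α t - Complex.exp ((β:ℂ)*I) := by
      intro t ht
      rw [hLCe _ (hmaps₂ t ht), Γ_eq3 ht]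
    have h := wind_eq (by norm_num : (2:ℝ) ≤ 3) hLc' hLe'
    rw [h, show κ + ((3:ℝ) - 2) * ((α + 2*Real.pi) - κ) = α + 2*Real.pi by ring,
      show κ + ((2:ℝ) - 2) * ((α + 2*Real.pi) - κ) = κ by ring]
  have c2' : wind (fun t => Γ F κ (α + 2*Real.pi) α t - Complex.exp ((β:ℂ)*I)) 2 3 =
      L₂ 3 - L₂ 2 :=
    wind_restrict (by norm_num) (by norm_num) (by norm_num) hL₂c hL₂e
  have d : wind (fun θ : ℝ => 2 * Complex.exp ((θ:ℂ)*I) - Complex.exp ((β:ℂ)*I))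
      α (α + 2*Real.pi) = 2*Real.pi*I := wind_cir (by rw [habs_p]; norm_num)
  have d' : wind (fun θ : ℝ => 2 * Complex.exp ((θ:ℂ)*I) - Complex.exp ((β:ℂ)*I))
      α (α + 2*Real.pi) = LC (α + 2*Real.pi) - LC α :=
    wind_eq (by linarith) hLCc hLCe
  have e1 : wind (fun t => Γ F κ α α t - Complex.exp ((β:ℂ)*I)) 0 4 = L₁ 4 - L₁ 0 :=
    wind_eq h04 hL₁c hL₁e
  have e2 : wind (fun t => Γ F κ (α + 2*Real.pi) α t - Complex.exp ((β:ℂ)*I)) 0 4 =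
      L₂ 4 - L₂ 0 := wind_eq h04 hL₂c hL₂e
  have hdiff : wind (fun t => Γ F κ (α + 2*Real.pi) α t - Complex.exp ((β:ℂ)*I)) 0 4 -
      wind (fun t => Γ F κ α α t - Complex.exp ((β:ℂ)*I)) 0 4 = 2*Real.pi*I := by
    rw [e1, e2]
    linear_combination a1 - a2 + b1 - b2 + c1' - c1 + c2 - c2' + d - d'
  -- W₁ is constant on B, so W₁ p = W₁ q
  have hW1B : wind (fun t => Γ F κ α α t - Complex.exp ((β:ℂ)*I)) 0 4 =
      wind (fun t => Γ F κ α α t - Complex.exp ((δ:ℂ)*I)) 0 4 :=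
    wind_const h04 hΓ₁cont.continuousOn hΓ₁loop hBco (hBavoid α hω1) hpB hqB
  -- W₁ q = 0 via the outgoing ray
  have hKq : IsPreconnected ((fun s : ℝ => (s:ℂ) * Complex.exp ((δ:ℂ)*I)) '' Icc 1 20) :=
    isPreconnected_Icc.image _ (Continuous.continuousOn
      ((Complex.continuous_ofReal).mul continuous_const))
  have hW1ray : wind (fun t => Γ F κ α α t - Complex.exp ((δ:ℂ)*I)) 0 4 =
      wind (fun t => Γ F κ α α t - ((20:ℝ):ℂ) * Complex.exp ((δ:ℂ)*I)) 0 4 := by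
    have h := wind_const h04 hΓ₁cont.continuousOn hΓ₁loop hKq
      (by rintro x ⟨s, hs, rfl⟩; exact hrayq s hs)
      (show Complex.exp ((δ:ℂ)*I) ∈ _ from ⟨1, hone20, by norm_num⟩)
      (show ((20:ℝ):ℂ) * Complex.exp ((δ:ℂ)*I) ∈ _ from ⟨20, ⟨by norm_num, le_rfl⟩, rfl⟩)
    exact h
  have hW1far : wind (fun t => Γ F κ α α t - ((20:ℝ):ℂ) * Complex.exp ((δ:ℂ)*I)) 0 4 = 0 :=
    wind_zero_far h04 hΓ₁cont.continuousOn hΓ₁loop (Γ_bound hF1 hω1 hFb)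
      (by rw [map_mul, Complex.abs_ofReal, habs_q, mul_one]; norm_num)
  -- W₂ p = 0 via the outgoing ray
  have hKp : IsPreconnected ((fun s : ℝ => (s:ℂ) * Complex.exp ((β:ℂ)*I)) '' Icc 1 20) :=
    isPreconnected_Icc.image _ (Continuous.continuousOn
      ((Complex.continuous_ofReal).mul continuous_const))
  have hW2ray : wind (fun t => Γ F κ (α + 2*Real.pi) α t - Complex.exp ((β:ℂ)*I)) 0 4 =
      wind (fun t => Γ F κ (α + 2*Real.pi) α t - ((20:ℝ):ℂ) * Complex.exp ((β:ℂ)*I)) 0 4 := by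
    have h := wind_const h04 hΓ₂cont.continuousOn hΓ₂loop hKp
      (by rintro x ⟨s, hs, rfl⟩; exact hrayp s hs)
      (show Complex.exp ((β:ℂ)*I) ∈ _ from ⟨1, hone20, by norm_num⟩)
      (show ((20:ℝ):ℂ) * Complex.exp ((β:ℂ)*I) ∈ _ from ⟨20, ⟨by norm_num, le_rfl⟩, rfl⟩)
    exact h
  have hW2far : wind (fun t => Γ F κ (α + 2*Real.pi) α t - ((20:ℝ):ℂ) * Complex.exp ((β:ℂ)*I))
      0 4 = 0 :=
    wind_zero_far h04 hΓ₂cont.continuousOn hΓ₂loop (Γ_bound hF1 hω2 hFb)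
      (by rw [map_mul, Complex.abs_ofReal, habs_p, mul_one]; norm_num)
  -- contradiction
  rw [hW2ray, hW2far, hW1B, hW1ray, hW1far] at hdiff
  have : (2*Real.pi*I : ℂ) = 0 := by linear_combination -hdiff
  have him := congrArg Complex.im this
  simp at him

lemma homeo_image_ccIn {X Y : Type*} [TopologicalSpace X] [TopologicalSpace Y] (h : X ≃ₜ Y)
    (s : Set X) (x : X) :
    ⇑h '' connectedComponentIn s x = connectedComponentIn (⇑h '' s) (h x) := by
  by_cases hx : x ∈ s
  · apply subset_antisymm
    · apply IsPreconnected.subset_connectedComponentIn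
      · exact (isPreconnected_connectedComponentIn).image _ h.continuous.continuousOn
      · exact ⟨x, mem_connectedComponentIn hx, rfl⟩
      · exact image_mono (connectedComponentIn_subset _ _)
    · intro y hy
      have h1 : ⇑h.symm '' connectedComponentIn (⇑h '' s) (h x) ⊆ connectedComponentIn s x := by
        apply IsPreconnected.subset_connectedComponentIn
        · exact (isPreconnected_connectedComponentIn).image _ h.symm.continuous.continuousOn
        · exact ⟨h x, mem_connectedComponentIn (mem_image_of_mem _ hx), h.symm_apply_apply x⟩
        · rintro z ⟨w, hw, rfl⟩
          obtain ⟨u, hu, rfl⟩ := connectedComponentIn_subset (⇑h '' s) (h x) hw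
          rwa [h.symm_apply_apply]
      have h2 : h.symm y ∈ connectedComponentIn s x := h1 (mem_image_of_mem _ hy)
      exact ⟨h.symm y, h2, h.apply_symm_apply y⟩
  · have hx' : h x ∉ ⇑h '' s := fun hc => hx (h.injective.mem_set_image.mp hc)
    rw [connectedComponentIn_eq_empty hx, connectedComponentIn_eq_empty hx', image_empty]

end SepAux

open SepAux Set

/-- For closed, connected, pairwise disjoint `A, B, C ⊆ 𝔻`, each meeting the boundary
circle `S`: `B` separates `A` from `C` in `𝔻` (they lie in distinct connected
components of `𝔻 \ B`) iff `B ∩ S` separates `A ∩ S` from `C ∩ S` in `S`. -/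
theorem separation_in_disc_iff_circle (A B C : Set E2)
    (hAd : A ⊆ disc) (hBd : B ⊆ disc) (hCd : C ⊆ disc)
    (hAcl : IsClosed A) (hBcl : IsClosed B) (hCcl : IsClosed C)
    (hAco : IsConnected A) (hBco : IsConnected B) (hCco : IsConnected C)
    (hAB : Disjoint A B) (hBC : Disjoint B C) (hAC : Disjoint A C)
    (hAS : (A ∩ circ).Nonempty) (hBS : (B ∩ circ).Nonempty) (hCS : (C ∩ circ).Nonempty) :
    (∀ a ∈ A, ∀ c ∈ C,
        connectedComponentIn (disc \ B) a ≠ connectedComponentIn (disc \ B) c) ↔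
      (∀ a ∈ A ∩ circ, ∀ c ∈ C ∩ circ,
        connectedComponentIn (circ \ (B ∩ circ)) a ≠
          connectedComponentIn (circ \ (B ∩ circ)) c) := by
  have hdisc : disc = closedBall (0 : E2) 1 := rfl
  have hcirc : circ = sphere (0 : E2) 1 := rfl
  constructor
  · intro H a ha c hc heq
    have hsub : circ \ (B ∩ circ) ⊆ disc \ B := by
      rw [Set.diff_inter_self_eq_diff]
      exact fun z hz => ⟨sphere_subset_closedBall hz.1, hz.2⟩
    have hc' : c ∈ circ \ (B ∩ circ) := ⟨hc.2, fun hm => Set.disjoint_left.mp hBC hm.1 hc.1⟩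
    have hcc : c ∈ connectedComponentIn (circ \ (B ∩ circ)) a := by
      rw [heq]; exact mem_connectedComponentIn hc'
    have hdc : c ∈ connectedComponentIn (disc \ B) a := connectedComponentIn_mono a hsub hcc
    exact H a ha.1 c hc.1 (connectedComponentIn_eq hdc)
  · intro H a ha c hc heq
    obtain ⟨a₀, ha₀⟩ := hAS
    obtain ⟨c₀, hc₀⟩ := hCS
    have hAsub : A ⊆ disc \ B := fun z hz => ⟨hAd hz, fun hB => Set.disjoint_left.mp hAB hz hB⟩
    have hCsub : C ⊆ disc \ B := fun z hz => ⟨hCd hz, fun hB => Set.disjoint_left.mp hBC hB hz⟩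
    have h1 : a₀ ∈ connectedComponentIn (disc \ B) a :=
      hAco.isPreconnected.subset_connectedComponentIn ha hAsub ha₀.1
    have h2 : c₀ ∈ connectedComponentIn (disc \ B) c :=
      hCco.isPreconnected.subset_connectedComponentIn hc hCsub hc₀.1
    have hco : c₀ ∈ connectedComponentIn (disc \ B) a₀ := by
      rw [← connectedComponentIn_eq h1, heq]
      exact h2
    -- transfer everything along the isometric equivalence ℂ ≃ E2
    set li := Complex.orthonormalBasisOneI.repr with hli
    set e : ℂ ≃ₜ E2 := li.toHomeomorph with he
    have hiso : Isometry ⇑e := li.isometry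
    have he0 : e 0 = 0 := map_zero li
    have hpredisc : ⇑e ⁻¹' (closedBall 0 1 : Set E2) = closedBall (0:ℂ) 1 := by
      have h := hiso.preimage_closedBall 0 1
      rwa [he0] at h
    have hpresph : ⇑e ⁻¹' (sphere 0 1 : Set E2) = sphere (0:ℂ) 1 := by
      have h := hiso.preimage_sphere 0 1
      rwa [he0] at h
    set B' : Set ℂ := ⇑e ⁻¹' B with hB'def
    have hB'd : B' ⊆ closedBall (0:ℂ) 1 := by
      rw [← hpredisc]
      exact preimage_mono (hdisc ▸ hBd)
    have hB'cl : IsClosed B' := hBcl.preimage e.continuous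
    have hB'img : ⇑e.symm '' B = B' := by
      ext z
      constructor
      · rintro ⟨w, hw, rfl⟩
        show e (e.symm w) ∈ B
        rw [e.apply_symm_apply]
        exact hw
      · intro hz
        exact ⟨e z, hz, e.symm_apply_apply z⟩
    have hB'co : IsPreconnected B' := by
      rw [← hB'img]
      exact hBco.isPreconnected.image _ e.symm.continuous.continuousOn
    have hea : e (e.symm a₀) = a₀ := e.apply_symm_apply a₀
    have hec : e (e.symm c₀) = c₀ := e.apply_symm_apply c₀
    have ha₀s : e.symm a₀ ∈ sphere (0:ℂ) 1 := by
      rw [← hpresph]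
      have hm : e (e.symm a₀) ∈ (sphere 0 1 : Set E2) := by rw [hea]; exact hcirc ▸ ha₀.2
      exact hm
    have hc₀s : e.symm c₀ ∈ sphere (0:ℂ) 1 := by
      rw [← hpresph]
      have hm : e (e.symm c₀) ∈ (sphere 0 1 : Set E2) := by rw [hec]; exact hcirc ▸ hc₀.2
      exact hm
    have haB : a₀ ∉ B := fun h => Set.disjoint_left.mp hAB ha₀.1 h
    have hcB : c₀ ∉ B := fun h => Set.disjoint_left.mp hBC h hc₀.1
    have ha₀B' : e.symm a₀ ∉ B' := fun h => haB (hea ▸ Set.mem_preimage.mp h)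
    have hc₀B' : e.symm c₀ ∉ B' := fun h => hcB (hec ▸ Set.mem_preimage.mp h)
    have hane : a₀ ≠ c₀ := fun h => Set.disjoint_left.mp hAC ha₀.1 (h ▸ hc₀.1)
    have hane' : e.symm a₀ ≠ e.symm c₀ := fun h => hane (by rw [← hea, ← hec, h])
    have hpre_sphdiff : ⇑e ⁻¹' (circ \ B) = sphere (0:ℂ) 1 \ B' := by
      rw [hcirc, preimage_diff, hpresph]
    have himgdiff : ⇑e '' (sphere (0:ℂ) 1 \ B') = circ \ B := by
      rw [← hpre_sphdiff, image_preimage_eq _ e.surjective]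
    have hpre_discdiff : ⇑e ⁻¹' (disc \ B) = closedBall (0:ℂ) 1 \ B' := by
      rw [hdisc, preimage_diff, hpredisc]
    have himgdisc : ⇑e '' (closedBall (0:ℂ) 1 \ B') = disc \ B := by
      rw [← hpre_discdiff, image_preimage_eq _ e.surjective]
    have hsep' : connectedComponentIn (sphere (0:ℂ) 1 \ B') (e.symm a₀) ≠
        connectedComponentIn (sphere (0:ℂ) 1 \ B') (e.symm c₀) := by
      intro hcceq
      have himg := congrArg (Set.image ⇑e) hcceq
      rw [homeo_image_ccIn, homeo_image_ccIn, himgdiff, hea, hec] at himg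
      have hHa := H a₀ ha₀ c₀ hc₀
      rw [Set.diff_inter_self_eq_diff] at hHa
      exact hHa himg
    have hco' : e.symm c₀ ∈ connectedComponentIn (closedBall (0:ℂ) 1 \ B') (e.symm a₀) := by
      have himg : ⇑e '' connectedComponentIn (closedBall (0:ℂ) 1 \ B') (e.symm a₀) =
          connectedComponentIn (disc \ B) a₀ := by
        rw [homeo_image_ccIn, himgdisc, hea]
      have hmem : c₀ ∈ ⇑e '' connectedComponentIn (closedBall (0:ℂ) 1 \ B') (e.symm a₀) := by
        rw [himg]; exact hco
      obtain ⟨w, hw, hwe⟩ := hmem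
      have hw' : w = e.symm c₀ := by
        have h := congrArg (⇑e.symm) hwe
        rwa [e.symm_apply_apply] at h
      rwa [← hw']
    exact key hB'd hB'cl hB'co ha₀s hc₀s ha₀B' hc₀B' hane' hsep' hco'

end
end

section
/- Let A and B be closed, connected, disjoint subsets of a closed disc 𝔻. Then there is exactly one connected component U of 𝔻 \ (A ∪ B) whose closure intersects both A and B (the 'region between A and B'). -/
open Metric

noncomputable section

open Set

lemma disc_convex : Convex ℝ disc := convex_closedBall 0 1
lemma disc_compact : IsCompact disc := isCompact_closedBall 0 1
lemma disc_closed : IsClosed disc := isClosed_closedBall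
lemma disc_preconn : IsPreconnected disc := disc_convex.isPreconnected
lemma zero_mem_disc : (0 : E2) ∈ disc := mem_closedBall_self zero_le_one

/-- `T` is relatively open in the disc. -/
def RelOpen (T : Set E2) : Prop := ∀ x ∈ T, ∃ ε > 0, ball x ε ∩ disc ⊆ T

lemma relOpen_diff {S : Set E2} (hS : IsClosed S) : RelOpen (disc \ S) := by
  intro x hx
  obtain ⟨ε, hε, hb⟩ := Metric.isOpen_iff.mp hS.isOpen_compl x hx.2
  exact ⟨ε, hε, fun y hy => ⟨hy.2, hb hy.1⟩⟩

lemma ball_inter_disc_preconn (x : E2) (ε : ℝ) : IsPreconnected (ball x ε ∩ disc) :=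
  ((convex_ball x ε).inter disc_convex).isPreconnected

lemma relOpen_ccIn {s : Set E2} (hsd : s ⊆ disc) (hrel : RelOpen s) (x : E2) :
    RelOpen (connectedComponentIn s x) := by
  intro y hy
  have hys : y ∈ s := connectedComponentIn_subset s x hy
  obtain ⟨ε, hε, hb⟩ := hrel y hys
  refine ⟨ε, hε, ?_⟩
  have h1 : ball y ε ∩ disc ⊆ connectedComponentIn s y :=
    (ball_inter_disc_preconn y ε).subset_connectedComponentIn
      ⟨mem_ball_self hε, hsd hys⟩ hb
  rw [connectedComponentIn_eq hy]; exact h1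


lemma RelOpen.notMem_closure {T W : Set E2} (hT : RelOpen T) (hW : W ⊆ disc)
    (hdisj : ∀ z ∈ T, z ∉ W) {x : E2} (hx : x ∈ T) : x ∉ closure W := by
  intro hcl
  obtain ⟨ε, hε, hb⟩ := hT x hx
  obtain ⟨y, hyW, hyb⟩ := Metric.mem_closure_iff.mp hcl ε hε
  exact hdisj y (hb ⟨mem_ball'.mpr hyb, hW hyW⟩) hyW

lemma RelOpen.isClosed_diff {T : Set E2} (hT : RelOpen T) : IsClosed (disc \ T) := by
  rw [← closure_subset_iff_isClosed]
  intro z hz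
  have hzd : z ∈ disc := disc_closed.closure_subset (closure_mono diff_subset hz)
  refine ⟨hzd, fun hzT => ?_⟩
  exact hT.notMem_closure diff_subset (fun w hw hw2 => hw2.2 hw) hzT hz

lemma RelOpen.eq_disc {T : Set E2} (hT : RelOpen T) (hTd : T ⊆ disc) (hcl : IsClosed T)
    (hne : T.Nonempty) : T = disc := by
  by_cases hsub : disc ⊆ T
  · exact le_antisymm hTd hsub
  set O : Set E2 := {z : E2 | ∃ ε > 0, ball z ε ∩ disc ⊆ T} with hO
  have hOopen : IsOpen O := by
    rw [Metric.isOpen_iff]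
    rintro z ⟨ε, hε, hb⟩
    refine ⟨ε / 2, by positivity, fun w hw => ⟨ε / 2, by positivity, fun u hu => ?_⟩⟩
    refine hb ⟨?_, hu.2⟩
    have := mem_ball.mp hw
    have := mem_ball.mp hu.1
    exact mem_ball.mpr (by calc dist u z ≤ dist u w + dist w z := dist_triangle u w z
                                _ < ε := by linarith)
  have hTO : T ⊆ O := fun x hx => hT x hx
  have hOT : O ∩ disc ⊆ T := fun z hz =>
    hz.1.choose_spec.2 ⟨mem_ball_self hz.1.choose_spec.1, hz.2⟩
  exfalso
  rcases disc_preconn O Tᶜ hOopen hcl.isOpen_compl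
    (fun x hx => by by_cases h : x ∈ T; exact Or.inl (hTO h); exact Or.inr h)
    ⟨hne.choose, hTd hne.some_mem, hTO hne.some_mem⟩
    (by obtain ⟨w, hwd, hwT⟩ := not_subset.mp hsub; exact ⟨w, hwd, hwT⟩) with ⟨z, hzd, hzO, hzT⟩
  exact hzT (hOT ⟨hzO, hzd⟩)

lemma preconn_union_closure {s t : Set E2} (hs : IsPreconnected s) (ht : IsPreconnected t)
    (h : (closure s ∩ t).Nonempty) : IsPreconnected (s ∪ t) := by
  obtain ⟨p, hps, hpt⟩ := h
  have h1 : IsPreconnected (s ∪ {p}) :=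
    hs.subset_closure subset_union_left
      (union_subset subset_closure (singleton_subset_iff.mpr hps))
  have h2 : IsPreconnected ((s ∪ {p}) ∪ t) :=
    IsPreconnected.union p (Or.inr rfl) hpt h1 ht
  have : (s ∪ {p}) ∪ t = s ∪ t := by
    rw [union_assoc]
    congr 1
    exact union_eq_self_of_subset_left (singleton_subset_iff.mpr hpt)
  rwa [this] at h2

open Complex in
lemma lattice_subsingleton {s : Set ℂ} (hs : IsPreconnected s)
    (h : ∀ z ∈ s, ∃ n : ℤ, z = n * (2 * Real.pi * I)) : s.Subsingleton := by
  classical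
  have him : ∀ k : ℤ, ((k : ℂ) * (2 * Real.pi * I)).im = 2 * Real.pi * k := by
    intro k
    simp [Complex.mul_im]
    ring
  have key : ∀ p q : ℤ, p < q → ((p:ℂ) * (2*Real.pi*I)) ∈ s → ((q:ℂ) * (2*Real.pi*I)) ∈ s → False := by
    intro p q hpq hp hq
    set a : ℝ := Real.pi * (2*p+1) with ha
    have h1 : IsClosed {ζ : ℂ | ζ.im ≤ a} := isClosed_le Complex.continuous_im continuous_const
    have h2 : IsClosed {ζ : ℂ | a ≤ ζ.im} := isClosed_le continuous_const Complex.continuous_im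
    obtain ⟨ζ, hζs, hζ1, hζ2⟩ := isPreconnected_closed_iff.mp hs _ _ h1 h2
      (fun ζ _ => le_total ζ.im a)
      ⟨_, hp, by
        show (↑p * (2 * ↑Real.pi * I)).im ≤ a
        rw [him]; nlinarith [Real.pi_pos]⟩
      ⟨_, hq, by
        show a ≤ (↑q * (2 * ↑Real.pi * I)).im
        rw [him]
        have hq' : (p:ℝ) + 1 ≤ q := by exact_mod_cast hpq
        nlinarith [Real.pi_pos]⟩
    obtain ⟨k, rfl⟩ := h ζ hζs
    rw [mem_setOf_eq, him] at hζ1 hζ2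
    have heq : 2 * Real.pi * k = a := le_antisymm hζ1 hζ2
    rw [ha] at heq
    have : (2 * k : ℝ) = 2*p+1 := by
      have h' : Real.pi * (2*(k:ℝ)) = Real.pi * (2*(p:ℝ)+1) := by linarith [heq]
      have := mul_left_cancel₀ Real.pi_ne_zero h'
      linarith
    have : (2 * k : ℤ) = 2*p+1 := by exact_mod_cast this
    omega
  intro z hz w hw
  obtain ⟨n, hn⟩ := h z hz
  obtain ⟨m, hm⟩ := h w hw
  rcases lt_trichotomy n m with hlt | heq | hgt
  · exact absurd (key n m hlt (hn ▸ hz) (hm ▸ hw)) (by simp)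
  · rw [hn, hm, heq]
  · exact absurd (key m n hgt (hm ▸ hw) (hn ▸ hz)) (by simp)

open Complex in
/-- Elementary logarithm lifting on the (convex, compact) disc. -/
lemma exists_log_on_disc {f : E2 → ℂ} (hf : ContinuousOn f disc) (h0 : ∀ x ∈ disc, f x ≠ 0) :
    ∃ h : E2 → ℂ, ContinuousOn h disc ∧ ∀ x ∈ disc, Complex.exp (h x) = f x := by
  classical
  obtain ⟨z₀, hz₀, hmin⟩ := disc_compact.exists_isMinOn ⟨0, zero_mem_disc⟩ hf.norm
  set m := ‖f z₀‖ with hm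
  have hmpos : 0 < m := norm_pos_iff.mpr (h0 z₀ hz₀)
  obtain ⟨δ, hδ, hδ'⟩ := Metric.uniformContinuousOn_iff.mp
    (disc_compact.uniformContinuousOn_of_continuous hf) m hmpos
  obtain ⟨N₀, hN₀⟩ := exists_nat_one_div_lt hδ
  set N : ℕ := N₀ + 1 with hN
  have hNpos : (0:ℝ) < (N:ℝ) := by positivity
  have hNlt : 1 / (N:ℝ) < δ := by
    have : ((N:ℝ)) = (N₀:ℝ) + 1 := by push_cast [hN]; ring
    rwa [this]
  set c : ℕ → ℝ := fun k => (k : ℝ) / N with hc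
  have hc01 : ∀ k ≤ N, 0 ≤ c k ∧ c k ≤ 1 := by
    intro k hk
    constructor
    · exact div_nonneg (Nat.cast_nonneg k) hNpos.le
    · rw [div_le_one hNpos]; exact_mod_cast hk
  have hcmem : ∀ k ≤ N, ∀ x ∈ disc, c k • x ∈ disc := by
    intro k hk x hx
    rw [disc, mem_closedBall_zero_iff] at hx ⊢
    rw [norm_smul, Real.norm_eq_abs, _root_.abs_of_nonneg (hc01 k hk).1]
    calc c k * ‖x‖ ≤ 1 * 1 := by
          apply mul_le_mul (hc01 k hk).2 hx (norm_nonneg x) zero_le_one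
      _ = 1 := one_mul 1
  have hstep : ∀ k, ∀ x ∈ disc, dist (c (k+1) • x) (c k • x) < δ := by
    intro k x hx
    rw [disc, mem_closedBall_zero_iff] at hx
    rw [dist_eq_norm, ← sub_smul, norm_smul, Real.norm_eq_abs]
    have hsub : c (k+1) - c k = 1 / N := by
      rw [hc]
      push_cast
      field_simp
      ring
    rw [hsub, _root_.abs_of_pos (one_div_pos.mpr hNpos)]
    calc 1/(N:ℝ) * ‖x‖ ≤ 1/(N:ℝ) * 1 := by
          apply mul_le_mul_of_nonneg_left hx (by positivity)
      _ = 1/(N:ℝ) := mul_one _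
      _ < δ := hNlt
  set r : ℕ → E2 → ℂ := fun k x => f (c (k+1) • x) / f (c k • x) with hr
  have hrne : ∀ k < N, ∀ x ∈ disc, r k x ≠ 0 := by
    intro k hk x hx
    exact div_ne_zero (h0 _ (hcmem (k+1) hk x hx)) (h0 _ (hcmem k hk.le x hx))
  have hrslit : ∀ k < N, ∀ x ∈ disc, r k x ∈ slitPlane := by
    intro k hk x hx
    have hy : c k • x ∈ disc := hcmem k hk.le x hx
    have hy' : c (k+1) • x ∈ disc := hcmem (k+1) hk x hx
    have hfy : f (c k • x) ≠ 0 := h0 _ hy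
    have hd : ‖f (c (k+1) • x) - f (c k • x)‖ < m := by
      have := hδ' _ hy' _ hy (hstep k x hx)
      rwa [dist_eq_norm] at this
    have hmle : m ≤ ‖f (c k • x)‖ := hmin hy
    have hlt : ‖r k x - 1‖ < 1 := by
      have hne : ‖f (c k • x)‖ ≠ 0 := norm_ne_zero_iff.mpr hfy
      rw [hr]
      have : f (c (k+1) • x) / f (c k • x) - 1
          = (f (c (k+1) • x) - f (c k • x)) / f (c k • x) := by
        field_simp
      rw [this, norm_div]
      rw [div_lt_one (lt_of_lt_of_le hmpos hmle)]
      exact lt_of_lt_of_le hd hmle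
    have := mem_slitPlane_of_norm_lt_one hlt
    rwa [add_sub_cancel] at this
  have hrc : ∀ k < N, ContinuousOn (fun x => r k x) disc := by
    intro k hk
    have h1 : ContinuousOn (fun x : E2 => f (c (k+1) • x)) disc :=
      hf.comp (continuous_const_smul (c (k+1))).continuousOn
        (fun x hx => hcmem (k+1) hk x hx)
    have h2 : ContinuousOn (fun x : E2 => f (c k • x)) disc :=
      hf.comp (continuous_const_smul (c k)).continuousOn
        (fun x hx => hcmem k hk.le x hx)
    exact h1.div h2 (fun x hx => h0 _ (hcmem k hk.le x hx))
  refine ⟨fun x => Complex.log (f 0) + ∑ k ∈ Finset.range N, Complex.log (r k x), ?_, ?_⟩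
  · apply ContinuousOn.add continuousOn_const
    apply continuousOn_finset_sum
    intro k hk
    rw [Finset.mem_range] at hk
    intro x hx
    exact (continuousAt_clog (hrslit k hk x hx)).comp_continuousWithinAt
      ((hrc k hk) x hx)
  · intro x hx
    rw [Complex.exp_add, Complex.exp_sum]
    have hprod : ∀ M ≤ N, ∏ k ∈ Finset.range M, Complex.exp (Complex.log (r k x))
        = f (c M • x) / f (c 0 • x) := by
      intro M
      induction M with
      | zero =>
        intro _
        simp [div_self (h0 _ (hcmem 0 (Nat.zero_le N) x hx))]
      | succ M ih =>
        intro hM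
        rw [Finset.prod_range_succ, ih (Nat.le_of_succ_le hM),
          Complex.exp_log (hrne M hM x hx)]
        rw [hr]
        have h1 : f (c M • x) ≠ 0 := h0 _ (hcmem M (Nat.le_of_succ_le hM) x hx)
        have h2 : f (c 0 • x) ≠ 0 := h0 _ (hcmem 0 (Nat.zero_le N) x hx)
        field_simp
    rw [hprod N le_rfl]
    have hc0 : c 0 • x = 0 := by rw [hc]; push_cast; rw [zero_div, zero_smul]
    have hcN : c N • x = x := by
      have hcN1 : c N = 1 := div_self hNpos.ne'
      rw [hcN1, one_smul]
    rw [hc0, hcN, Complex.exp_log (h0 0 zero_mem_disc)]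
    rw [mul_div_assoc']
    exact mul_div_cancel_left₀ _ (h0 0 zero_mem_disc)

open Complex in
/-- The disc is unicoherent: the intersection of two closed connected sets whose
union is the disc is connected. -/
lemma disc_unicoherent {M N : Set E2} (hM : IsClosed M) (hN : IsClosed N)
    (hMp : IsPreconnected M) (hNp : IsPreconnected N) (hMN : M ∪ N = disc) :
    IsPreconnected (M ∩ N) := by
  classical
  by_contra hcon
  rw [isPreconnected_closed_iff] at hcon
  push_neg at hcon
  obtain ⟨t, t', ht, ht', hcover, hne1, hne2, hempty⟩ := hcon
  set P : Set E2 := (M ∩ N) ∩ t with hP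
  set Q : Set E2 := (M ∩ N) ∩ t' with hQ
  have hPcl : IsClosed P := ((hM.inter hN).inter ht)
  have hQcl : IsClosed Q := ((hM.inter hN).inter ht')
  have hPQdisj : Disjoint P Q := by
    rw [disjoint_left]
    rintro z ⟨hz1, hz2⟩ ⟨_, hz3⟩
    have : z ∈ M ∩ N ∩ (t ∩ t') := ⟨hz1, hz2, hz3⟩
    rw [hempty] at this
    exact notMem_empty z this
  have hPQcover : M ∩ N = P ∪ Q := by
    ext z
    constructor
    · intro hz
      rcases hcover hz with h | h
      · exact Or.inl ⟨hz, h⟩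
      · exact Or.inr ⟨hz, h⟩
    · rintro (⟨hz, _⟩ | ⟨hz, _⟩) <;> exact hz
  obtain ⟨u, hu0, hu1, hu01⟩ := exists_continuous_zero_one_of_isClosed hPcl hQcl hPQdisj
  set f₁ : E2 → ℂ := fun x => Complex.exp (2 * Real.pi * I * (u x : ℂ)) with hf₁
  set f₂ : E2 → ℂ := fun x => Complex.exp (-(2 * Real.pi * I) * (u x : ℂ)) with hf₂
  have hf₁c : Continuous f₁ :=
    Complex.continuous_exp.comp (continuous_const.mul (Complex.continuous_ofReal.comp u.continuous))
  have hf₂c : Continuous f₂ :=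
    Complex.continuous_exp.comp (continuous_const.mul (Complex.continuous_ofReal.comp u.continuous))
  have hagree : ∀ y ∈ M ∩ N, f₁ y = f₂ y := by
    intro y hy
    rcases hPQcover ▸ hy with h | h
    · have : u y = 0 := hu0 h
      simp [hf₁, hf₂, this]
    · have : u y = 1 := hu1 h
      simp only [hf₁, hf₂, this]
      push_cast
      rw [mul_one, mul_one]
      have e1 : Complex.exp (2 * Real.pi * I) = 1 := by
        have := Complex.exp_int_mul_two_pi_mul_I 1
        simpa using this
      have e2 : Complex.exp (-(2 * Real.pi * I)) = 1 := by
        have := Complex.exp_int_mul_two_pi_mul_I (-1)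
        simpa using this
      rw [e1, e2]
  set F : E2 → ℂ := fun x => if x ∈ M then f₁ x else f₂ x with hF
  have hF_M : EqOn F f₁ M := fun y hy => if_pos hy
  have hF_N : EqOn F f₂ N := by
    intro y hy
    by_cases hyM : y ∈ M
    · rw [hF]
      simp only [if_pos hyM]
      exact hagree y ⟨hyM, hy⟩
    · exact if_neg hyM
  have hFc : ContinuousOn F disc := by
    rw [← hMN]
    intro x hx
    have cwaM : ContinuousWithinAt F M x := by
      by_cases hxM : x ∈ M
      · exact (hf₁c.continuousWithinAt).congr hF_M (hF_M hxM)
      · exact continuousWithinAt_of_notMem_closure (by rwa [hM.closure_eq])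
    have cwaN : ContinuousWithinAt F N x := by
      by_cases hxN : x ∈ N
      · exact (hf₂c.continuousWithinAt).congr hF_N (hF_N hxN)
      · exact continuousWithinAt_of_notMem_closure (by rwa [hN.closure_eq])
    exact cwaM.union cwaN
  have hF0 : ∀ x ∈ disc, F x ≠ 0 := by
    intro x _
    by_cases hxM : x ∈ M <;> simp [hF, hxM, hf₁, hf₂, Complex.exp_ne_zero]
  obtain ⟨h, hhc, hhe⟩ := exists_log_on_disc hFc hF0
  have hMsub : M ⊆ disc := hMN ▸ subset_union_left
  have hNsub : N ⊆ disc := hMN ▸ subset_union_right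
  -- the function h - 2πi u is (2πi ℤ)-valued on M
  set g₁ : E2 → ℂ := fun x => h x - 2 * Real.pi * I * (u x : ℂ) with hg₁
  set g₂ : E2 → ℂ := fun x => h x + 2 * Real.pi * I * (u x : ℂ) with hg₂
  have hg₁int : ∀ x ∈ M, ∃ n : ℤ, g₁ x = n * (2 * Real.pi * I) := by
    intro x hx
    rw [← Complex.exp_eq_one_iff, hg₁, Complex.exp_sub, hhe x (hMsub hx), hF_M hx, hf₁]
    exact div_self (Complex.exp_ne_zero _)
  have hg₂int : ∀ x ∈ N, ∃ n : ℤ, g₂ x = n * (2 * Real.pi * I) := by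
    intro x hx
    rw [← Complex.exp_eq_one_iff, hg₂, Complex.exp_add, hhe x (hNsub hx), hF_N hx, hf₂,
      ← Complex.exp_add]
    rw [show -(2 * ↑Real.pi * I) * (u x : ℂ) + 2 * ↑Real.pi * I * (u x : ℂ) = 0 by ring]
    exact Complex.exp_zero
  have hg₁c : ContinuousOn g₁ M := (hhc.mono hMsub).sub
    ((continuous_const.mul (Complex.continuous_ofReal.comp u.continuous)).continuousOn)
  have hg₂c : ContinuousOn g₂ N := (hhc.mono hNsub).add
    ((continuous_const.mul (Complex.continuous_ofReal.comp u.continuous)).continuousOn)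
  have hsub₁ : (g₁ '' M).Subsingleton :=
    lattice_subsingleton (hMp.image g₁ hg₁c) (by rintro z ⟨x, hx, rfl⟩; exact hg₁int x hx)
  have hsub₂ : (g₂ '' N).Subsingleton :=
    lattice_subsingleton (hNp.image g₂ hg₂c) (by rintro z ⟨x, hx, rfl⟩; exact hg₂int x hx)
  obtain ⟨p, hpMN, hpP⟩ : ∃ p, p ∈ M ∩ N ∧ p ∈ P := by
    obtain ⟨p, hp1, hp2⟩ := hne1; exact ⟨p, hp1, hp1, hp2⟩
  obtain ⟨q, hqMN, hqQ⟩ : ∃ q, q ∈ M ∩ N ∧ q ∈ Q := by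
    obtain ⟨q, hq1, hq2⟩ := hne2; exact ⟨q, hq1, hq1, hq2⟩
  have hup : u p = 0 := hu0 hpP
  have huq : u q = 1 := hu1 hqQ
  have e₁ : g₁ p = g₁ q := hsub₁ ⟨p, hpMN.1, rfl⟩ ⟨q, hqMN.1, rfl⟩
  have e₂ : g₂ p = g₂ q := hsub₂ ⟨p, hpMN.2, rfl⟩ ⟨q, hqMN.2, rfl⟩
  simp only [hg₁, hup, huq] at e₁
  simp only [hg₂, hup, huq] at e₂
  push_cast at e₁ e₂
  have hpi0 : ((4:ℂ) * Real.pi) * I = 0 := by linear_combination e₁ - e₂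
  rcases mul_eq_zero.mp hpi0 with h4 | hI
  · rcases mul_eq_zero.mp h4 with h' | h'
    · norm_num at h'
    · exact Real.pi_ne_zero (by exact_mod_cast h')
  · exact Complex.I_ne_zero hI

lemma closure_ccIn_subset {S : Set E2} (hS : IsClosed S) {x : E2} (hx : x ∈ disc \ S) :
    closure (connectedComponentIn (disc \ S) x) ⊆ connectedComponentIn (disc \ S) x ∪ S := by
  intro z hz
  set U := connectedComponentIn (disc \ S) x with hU
  have hUsub : U ⊆ disc \ S := connectedComponentIn_subset _ _
  have hzd : z ∈ disc := closure_minimal (hUsub.trans diff_subset) disc_closed hz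
  by_cases hzS : z ∈ S
  · exact Or.inr hzS
  · left
    obtain ⟨ε, hε, hb⟩ := relOpen_diff hS z ⟨hzd, hzS⟩
    obtain ⟨y, hyU, hyb⟩ := Metric.mem_closure_iff.mp hz ε hε
    have hyW : y ∈ ball z ε ∩ disc := ⟨mem_ball'.mpr hyb, (hUsub hyU).1⟩
    have hWp : IsPreconnected (ball z ε ∩ disc ∪ U) :=
      IsPreconnected.union' ⟨y, hyW, hyU⟩ (ball_inter_disc_preconn z ε)
        isPreconnected_connectedComponentIn
    have hsub2 : ball z ε ∩ disc ∪ U ⊆ disc \ S := union_subset hb hUsub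
    have hxmem : x ∈ ball z ε ∩ disc ∪ U := Or.inr (mem_connectedComponentIn hx)
    exact hWp.subset_connectedComponentIn hxmem hsub2 (Or.inl ⟨mem_ball_self hε, hzd⟩)

lemma frontier_component_preconn {K : Set E2} (hK : IsClosed K) (hKd : K ⊆ disc)
    (hKp : IsPreconnected K) (hKne : K.Nonempty) {y : E2} (hy : y ∈ disc \ K) :
    IsPreconnected (closure (connectedComponentIn (disc \ K) y)
      \ connectedComponentIn (disc \ K) y) := by
  set V := connectedComponentIn (disc \ K) y with hV
  have hVsub : V ⊆ disc \ K := connectedComponentIn_subset _ _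
  have hVd : V ⊆ disc := hVsub.trans diff_subset
  have hVrel : RelOpen V := relOpen_ccIn diff_subset (relOpen_diff hK) y
  have hVp : IsPreconnected V := isPreconnected_connectedComponentIn
  have hMcl : IsClosed (closure V) := isClosed_closure
  have hNcl : IsClosed (disc \ V) := hVrel.isClosed_diff
  have hMp : IsPreconnected (closure V) := hVp.closure
  obtain ⟨k₀, hk₀⟩ := hKne
  have hNp : IsPreconnected (disc \ V) := by
    apply isPreconnected_of_forall k₀
    intro w hw
    by_cases hwK : w ∈ K
    · exact ⟨K, fun z hz => ⟨hKd hz, fun hzV => (hVsub hzV).2 hz⟩, hk₀, hwK, hKp⟩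
    · have hwdK : w ∈ disc \ K := ⟨hw.1, hwK⟩
      set C := connectedComponentIn (disc \ K) w with hC
      have hCsub : C ⊆ disc \ K := connectedComponentIn_subset _ _
      have hCV : ∀ z ∈ C, z ∉ V := by
        intro z hzC hzV
        have h1 : connectedComponentIn (disc \ K) w = connectedComponentIn (disc \ K) z :=
          connectedComponentIn_eq hzC
        have h2 : connectedComponentIn (disc \ K) y = connectedComponentIn (disc \ K) z :=
          connectedComponentIn_eq hzV
        have : w ∈ V := by
          rw [hV, h2, ← h1]
          exact mem_connectedComponentIn hwdK
        exact hw.2 this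
      have hclC : (closure C ∩ K).Nonempty := by
        by_contra hcc
        rw [not_nonempty_iff_eq_empty] at hcc
        have hclsub : closure C ⊆ disc \ K := by
          intro z hz
          have hzd : z ∈ disc := closure_minimal (hCsub.trans diff_subset) disc_closed hz
          refine ⟨hzd, fun hzK => ?_⟩
          have : z ∈ closure C ∩ K := ⟨hz, hzK⟩
          rw [hcc] at this
          exact notMem_empty z this
        have hCcl : IsClosed C := by
          have h3 : closure C ⊆ C :=
            (isPreconnected_connectedComponentIn (x := w) (F := disc \ K)).closure.subset_connectedComponentIn
              (subset_closure (mem_connectedComponentIn hwdK)) hclsub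
          exact isClosed_of_closure_subset h3
        have hCrel : RelOpen C := relOpen_ccIn diff_subset (relOpen_diff hK) w
        have hCne : C.Nonempty := ⟨w, mem_connectedComponentIn hwdK⟩
        have hCd := hCrel.eq_disc (hCsub.trans diff_subset) hCcl hCne
        exact (hCsub (hCd ▸ hKd hk₀)).2 hk₀
      refine ⟨C ∪ K, ?_, Or.inr hk₀, Or.inl (mem_connectedComponentIn hwdK), ?_⟩
      · apply union_subset
        · intro z hz; exact ⟨(hCsub hz).1, hCV z hz⟩
        · intro z hz; exact ⟨hKd hz, fun hzV => (hVsub hzV).2 hz⟩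
      · exact preconn_union_closure isPreconnected_connectedComponentIn hKp hclC
  have hMN : closure V ∪ (disc \ V) = disc := by
    apply subset_antisymm
    · exact union_subset (closure_minimal hVd disc_closed) diff_subset
    · intro z hz
      by_cases hzV : z ∈ V
      · exact Or.inl (subset_closure hzV)
      · exact Or.inr ⟨hz, hzV⟩
  have hres := disc_unicoherent hMcl hNcl hMp hNp hMN
  have heq : closure V ∩ (disc \ V) = closure V \ V := by
    ext z
    constructor
    · rintro ⟨h1, h2⟩; exact ⟨h1, h2.2⟩
    · rintro ⟨h1, h2⟩; exact ⟨h1, closure_minimal hVd disc_closed h1, h2⟩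
  rwa [heq] at hres

lemma between_eq {A B : Set E2} (hAd : A ⊆ disc) (hBd : B ⊆ disc)
    (hAcl : IsClosed A) (hBcl : IsClosed B)
    (hAco : IsConnected A) (hBco : IsConnected B) (hAB : Disjoint A B)
    {x y : E2} (hx : x ∈ disc \ (A ∪ B)) (hy : y ∈ disc \ (A ∪ B))
    (hxA : (closure (connectedComponentIn (disc \ (A ∪ B)) x) ∩ A).Nonempty)
    (hxB : (closure (connectedComponentIn (disc \ (A ∪ B)) x) ∩ B).Nonempty)
    (hyA : (closure (connectedComponentIn (disc \ (A ∪ B)) y) ∩ A).Nonempty)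
    (hyB : (closure (connectedComponentIn (disc \ (A ∪ B)) y) ∩ B).Nonempty) :
    connectedComponentIn (disc \ (A ∪ B)) y = connectedComponentIn (disc \ (A ∪ B)) x := by
  classical
  by_contra hne
  have hABcl : IsClosed (A ∪ B) := hAcl.union hBcl
  set Ω : Set E2 := disc \ (A ∪ B) with hΩdef
  set U : Set E2 := connectedComponentIn Ω x with hUdef
  set V : Set E2 := connectedComponentIn Ω y with hVdef
  have hUsub : U ⊆ Ω := connectedComponentIn_subset _ _
  have hVsub : V ⊆ Ω := connectedComponentIn_subset _ _
  have hUV : ∀ z ∈ V, z ∉ U := by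
    intro z hzV hzU
    exact hne ((connectedComponentIn_eq hzV).trans (connectedComponentIn_eq hzU).symm)
  obtain ⟨a, haU, haA⟩ := hxA
  obtain ⟨b, hbU, hbB⟩ := hxB
  have hclU : closure U ⊆ U ∪ (A ∪ B) := closure_ccIn_subset hABcl hx
  have hclV : closure V ⊆ V ∪ (A ∪ B) := closure_ccIn_subset hABcl hy
  set K : Set E2 := (U ∪ A) ∪ B with hKdef
  have hKeq : K = (closure U ∪ A) ∪ B := by
    ext z
    constructor
    · rintro ((h | h) | h)
      · exact Or.inl (Or.inl (subset_closure h))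
      · exact Or.inl (Or.inr h)
      · exact Or.inr h
    · rintro ((h | h) | h)
      · rcases hclU h with h' | h' | h'
        · exact Or.inl (Or.inl h')
        · exact Or.inl (Or.inr h')
        · exact Or.inr h'
      · exact Or.inl (Or.inr h)
      · exact Or.inr h
  have hKcl : IsClosed K := by
    rw [hKeq]
    exact (isClosed_closure.union hAcl).union hBcl
  have hKp : IsPreconnected K := by
    have h1 : IsPreconnected (U ∪ A) :=
      preconn_union_closure isPreconnected_connectedComponentIn hAco.isPreconnected ⟨a, haU, haA⟩
    have h2 : (closure (U ∪ A) ∩ B).Nonempty :=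
      ⟨b, closure_mono subset_union_left hbU, hbB⟩
    exact preconn_union_closure h1 hBco.isPreconnected h2
  have hKd : K ⊆ disc :=
    union_subset (union_subset (hUsub.trans diff_subset) hAd) hBd
  have hKne : K.Nonempty := ⟨hAco.nonempty.some, Or.inl (Or.inr hAco.nonempty.some_mem)⟩
  have hyV : y ∈ V := mem_connectedComponentIn hy
  have hyK : y ∈ disc \ K := by
    refine ⟨hy.1, ?_⟩
    rintro ((h | h) | h)
    · exact hUV y hyV h
    · exact hy.2 (Or.inl h)
    · exact hy.2 (Or.inr h)
  have hΩK : disc \ K ⊆ Ω := by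
    intro z hz
    exact ⟨hz.1, fun h' => hz.2 (h'.elim (fun h'' => Or.inl (Or.inr h'')) (fun h'' => Or.inr h''))⟩
  have hVeq : V = connectedComponentIn (disc \ K) y := by
    apply subset_antisymm
    · apply IsPreconnected.subset_connectedComponentIn isPreconnected_connectedComponentIn hyV
      intro z hzV
      refine ⟨(hVsub hzV).1, ?_⟩
      rintro ((h | h) | h)
      · exact hUV z hzV h
      · exact (hVsub hzV).2 (Or.inl h)
      · exact (hVsub hzV).2 (Or.inr h)
    · exact IsPreconnected.subset_connectedComponentIn isPreconnected_connectedComponentIn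
        (mem_connectedComponentIn hyK)
        ((connectedComponentIn_subset _ _).trans hΩK)
  have hFr : IsPreconnected (closure V \ V) := by
    have := frontier_component_preconn hKcl hKd hKp hKne hyK
    rwa [← hVeq] at this
  have hFrAB : closure V \ V ⊆ A ∪ B := by
    rintro z ⟨hz1, hz2⟩
    rcases hclV hz1 with h | h
    · exact absurd h hz2
    · exact h
  obtain ⟨a', ha'cl, ha'A⟩ := hyA
  obtain ⟨b', hb'cl, hb'B⟩ := hyB
  have hFrA : ((closure V \ V) ∩ A).Nonempty :=
    ⟨a', ⟨ha'cl, fun hv => (hVsub hv).2 (Or.inl ha'A)⟩, ha'A⟩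
  have hFrB : ((closure V \ V) ∩ B).Nonempty :=
    ⟨b', ⟨hb'cl, fun hv => (hVsub hv).2 (Or.inr hb'B)⟩, hb'B⟩
  obtain ⟨z, _, hzA, hzB⟩ :=
    isPreconnected_closed_iff.mp hFr A B hAcl hBcl hFrAB hFrA hFrB
  exact disjoint_left.mp hAB hzA hzB

set_option maxHeartbeats 1000000 in
/-- For closed, connected, disjoint subsets `A, B` of the closed disc, there is exactly
one connected component of `𝔻 \ (A ∪ B)` whose closure meets both `A` and `B`
(the region between `A` and `B`). -/
theorem region_between (A B : Set E2)
    (hAd : A ⊆ disc) (hBd : B ⊆ disc)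
    (hAcl : IsClosed A) (hBcl : IsClosed B)
    (hAco : IsConnected A) (hBco : IsConnected B)
    (hAB : Disjoint A B) :
    ∃! U : Set E2,
      (∃ x ∈ disc \ (A ∪ B), U = connectedComponentIn (disc \ (A ∪ B)) x) ∧
        (closure U ∩ A).Nonempty ∧ (closure U ∩ B).Nonempty := by
  classical
  have hAcp : IsCompact A := disc_compact.of_isClosed_subset hAcl hAd
  have hBcp : IsCompact B := disc_compact.of_isClosed_subset hBcl hBd
  have hprodne : (A ×ˢ B).Nonempty := hAco.nonempty.prod hBco.nonempty
  obtain ⟨⟨a, b⟩, habm, hmin⟩ := (hAcp.prod hBcp).exists_isMinOn hprodne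
    (continuous_dist.continuousOn (s := A ×ˢ B))
  have hmin2 : ∀ p ∈ A ×ˢ B, dist a b ≤ dist p.1 p.2 := fun p hp => hmin hp
  have haA : a ∈ A := habm.1
  have hbB : b ∈ B := habm.2
  have hab : a ≠ b := fun h => disjoint_left.mp hAB haA (h ▸ hbB)
  have hdpos : 0 < dist a b := dist_pos.mpr hab
  have hseg_disc : segment ℝ a b ⊆ disc := disc_convex.segment_subset (hAd haA) (hBd hbB)
  have hsegA : ∀ p ∈ openSegment ℝ a b, p ∉ A := by
    rintro p ⟨s, t, hs, ht, hst, rfl⟩ hpA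
    have hmin' : dist a b ≤ dist (s • a + t • b) b := hmin2 (s • a + t • b, b) ⟨hpA, hbB⟩
    have heq : s • a + t • b - b = s • (a - b) := by
      have ht' : t = 1 - s := by linarith
      rw [ht', smul_sub, sub_smul, one_smul]
      abel
    have hdist : dist (s • a + t • b) b = s * dist a b := by
      rw [dist_eq_norm, heq, norm_smul, Real.norm_eq_abs, _root_.abs_of_pos hs, dist_eq_norm]
    rw [hdist] at hmin'
    nlinarith
  have hsegB : ∀ p ∈ openSegment ℝ a b, p ∉ B := by
    rintro p ⟨s, t, hs, ht, hst, rfl⟩ hpB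
    have hmin' : dist a b ≤ dist a (s • a + t • b) := hmin2 (a, s • a + t • b) ⟨haA, hpB⟩
    have heq : a - (s • a + t • b) = t • (a - b) := by
      have hs' : s = 1 - t := by linarith
      rw [hs', smul_sub, sub_smul, one_smul]
      abel
    have hdist : dist a (s • a + t • b) = t * dist a b := by
      rw [dist_eq_norm, heq, norm_smul, Real.norm_eq_abs, _root_.abs_of_pos ht, dist_eq_norm]
    rw [hdist] at hmin'
    nlinarith
  have hsegΩ : openSegment ℝ a b ⊆ disc \ (A ∪ B) := by
    intro p hp
    refine ⟨hseg_disc (openSegment_subset_segment ℝ a b hp), ?_⟩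
    rintro (h | h)
    · exact hsegA p hp h
    · exact hsegB p hp h
  have hx₀ : (1/2 : ℝ) • a + (1/2 : ℝ) • b ∈ openSegment ℝ a b :=
    ⟨1/2, 1/2, by norm_num, by norm_num, by norm_num, rfl⟩
  set x₀ : E2 := (1/2 : ℝ) • a + (1/2 : ℝ) • b with hx₀def
  set U : Set E2 := connectedComponentIn (disc \ (A ∪ B)) x₀ with hUdef
  have hsegU : openSegment ℝ a b ⊆ U :=
    (convex_openSegment a b).isPreconnected.subset_connectedComponentIn hx₀ hsegΩ
  have hclU : segment ℝ a b ⊆ closure U := by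
    rw [← closure_openSegment]
    exact closure_mono hsegU
  have hUA : (closure U ∩ A).Nonempty := ⟨a, hclU (left_mem_segment ℝ a b), haA⟩
  have hUB : (closure U ∩ B).Nonempty := ⟨b, hclU (right_mem_segment ℝ a b), hbB⟩
  refine ⟨U, ⟨⟨x₀, hsegΩ hx₀, rfl⟩, hUA, hUB⟩, ?_⟩
  rintro W ⟨⟨y, hy, rfl⟩, hWA, hWB⟩
  exact between_eq hAd hBd hAcl hBcl hAco hBco hAB (hsegΩ hx₀) hy hUA hUB hWA hWB

end
end

section
/- Let 𝒟 be a nontrivial decomposition of a compact interval I into closed subintervals. Then the quotient space I/𝒟 is homeomorphic to a compact interval. -/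
open Set

namespace IntervalDecompositionAux

abbrev X : Type := ↥(Set.Icc (0 : ℝ) 1)

def lo : X := ⟨0, by constructor <;> norm_num⟩
def hi : X := ⟨1, by constructor <;> norm_num⟩

variable {s : Setoid X}

lemma rel_between (hord : ∀ x : X, Set.OrdConnected {y | s.r x y}) {x y z : X}
    (hxz : s.r x z) (h1 : x ≤ y) (h2 : y ≤ z) : s.r x y :=
  (hord x).out (Setoid.refl x) hxz ⟨h1, h2⟩

lemma coh (hord : ∀ x : X, Set.OrdConnected {y | s.r x y}) {x y x' y' : X}
    (hxy : ¬ s.r x y) (hlt : x < y) (hx : s.r x x') (hy : s.r y y') : x' < y' := by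
  by_contra h
  push_neg at h
  rcases le_or_gt y' x with h1 | h1
  · exact hxy (Setoid.symm (Setoid.trans hy (rel_between hord (Setoid.symm hy) h1 hlt.le)))
  · exact hxy (Setoid.trans (rel_between hord hx h1.le h) (Setoid.symm hy))

lemma notrel_transport {x y x' y' : X} (hxy : ¬ s.r x y) (hx : s.r x x') (hy : s.r y y') :
    ¬ s.r x' y' := fun h => hxy (Setoid.trans (Setoid.trans hx h) (Setoid.symm hy))

def qlt (s : Setoid X) (C D : Quotient s) : Prop :=
  ∃ x y : X, ¬ s.r x y ∧ x < y ∧ Quotient.mk s x = C ∧ Quotient.mk s y = D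

lemma qlt_of_lt {x y : X} (h : ¬ s.r x y) (hlt : x < y) :
    qlt s (Quotient.mk s x) (Quotient.mk s y) := ⟨x, y, h, hlt, rfl, rfl⟩

lemma qlt_mk (hord : ∀ x : X, Set.OrdConnected {y | s.r x y}) {x y : X}
    (h : qlt s (Quotient.mk s x) (Quotient.mk s y)) : ¬ s.r x y ∧ x < y := by
  obtain ⟨a, b, hab, hlt, ha, hb⟩ := h
  have hax : s.r a x := Quotient.exact ha
  have hby : s.r b y := Quotient.exact hb
  exact ⟨notrel_transport hab hax hby, coh hord hab hlt hax hby⟩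

lemma qlt_trans (hord : ∀ x : X, Set.OrdConnected {y | s.r x y}) {C D E : Quotient s}
    (h1 : qlt s C D) (h2 : qlt s D E) : qlt s C E := by
  obtain ⟨x, y, hxy, hlt, rfl, rfl⟩ := h1
  obtain ⟨y', z, hyz, hlt', hy', rfl⟩ := h2
  have hyy' : s.r y' y := Quotient.exact hy'
  refine ⟨x, z, ?_, ?_, rfl, rfl⟩
  · intro h
    exact lt_asymm hlt (coh hord hyz hlt' hyy' (Setoid.symm h))
  · by_contra h
    push_neg at h
    have h2 : y' < x := lt_of_lt_of_le hlt' h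
    have : s.r y' x := rel_between hord hyy' h2.le hlt.le
    exact hxy (Setoid.trans (Setoid.symm this) hyy')

lemma qlt_trichotomy (C D : Quotient s) : C = D ∨ qlt s C D ∨ qlt s D C := by
  obtain ⟨x, rfl⟩ := Quotient.exists_rep C
  obtain ⟨y, rfl⟩ := Quotient.exists_rep D
  by_cases h : s.r x y
  · exact Or.inl (Quotient.sound h)
  · have hne : x ≠ y := fun e => h (e ▸ Setoid.refl x)
    rcases lt_or_gt_of_ne hne with hlt | hlt
    · exact Or.inr (Or.inl (qlt_of_lt h hlt))
    · exact Or.inr (Or.inr (qlt_of_lt (fun e => h (Setoid.symm e)) hlt))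

lemma qlt_irrefl (hord : ∀ x : X, Set.OrdConnected {y | s.r x y}) (C : Quotient s) :
    ¬ qlt s C C := by
  obtain ⟨x, rfl⟩ := Quotient.exists_rep C
  intro h
  exact (qlt_mk hord h).1 (Setoid.refl x)

lemma qlt_asymm (hord : ∀ x : X, Set.OrdConnected {y | s.r x y}) {C D : Quotient s}
    (h : qlt s C D) : ¬ qlt s D C := fun h' => qlt_irrefl hord C (qlt_trans hord h h')

lemma lt_of_qlt (hord : ∀ x : X, Set.OrdConnected {y | s.r x y}) {x y : X}
    (h : qlt s (Quotient.mk s x) (Quotient.mk s y)) : x < y := (qlt_mk hord h).2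

lemma le_cases {x y : X} (h : x ≤ y) :
    Quotient.mk s x = Quotient.mk s y ∨ qlt s (Quotient.mk s x) (Quotient.mk s y) := by
  by_cases hr : s.r x y
  · exact Or.inl (Quotient.sound hr)
  · exact Or.inr (qlt_of_lt hr (lt_of_le_of_ne h (fun e => hr (e ▸ Setoid.refl x))))

lemma qlt_bot (hord : ∀ x : X, Set.OrdConnected {y | s.r x y}) (C : Quotient s) :
    ¬ qlt s C (Quotient.mk s lo) := by
  rintro ⟨x, y, hxy, hlt, -, hy⟩
  have h1 : x < lo := coh hord hxy hlt (Setoid.refl x) (Quotient.exact hy)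
  have h2 : (x : ℝ) < 0 := Subtype.coe_lt_coe.mpr h1
  exact absurd h2 (not_lt.mpr x.2.1)

lemma qlt_top (hord : ∀ x : X, Set.OrdConnected {y | s.r x y}) (C : Quotient s) :
    ¬ qlt s (Quotient.mk s hi) C := by
  rintro ⟨x, y, hxy, hlt, hx, -⟩
  have h1 : hi < y := coh hord hxy hlt (Quotient.exact hx) (Setoid.refl y)
  have h2 : (1 : ℝ) < (y : ℝ) := Subtype.coe_lt_coe.mpr h1
  exact absurd h2 (not_lt.mpr y.2.2)

lemma exists_max (hcl : ∀ x : X, IsClosed {y | s.r x y}) (x : X) :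
    ∃ b : X, s.r x b ∧ ∀ y, s.r x y → y ≤ b := by
  have hK : IsCompact ((fun y : X => (y : ℝ)) '' {y | s.r x y}) :=
    ((hcl x).isCompact).image continuous_subtype_val
  obtain ⟨b, hbmem, hbub⟩ := hK.exists_isGreatest ⟨x, ⟨x, Setoid.refl x, rfl⟩⟩
  obtain ⟨b', hb', rfl⟩ := hbmem
  exact ⟨b', hb', fun y hy => hbub ⟨y, hy, rfl⟩⟩

lemma exists_min (hcl : ∀ x : X, IsClosed {y | s.r x y}) (x : X) :
    ∃ b : X, s.r x b ∧ ∀ y, s.r x y → b ≤ y := by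
  have hK : IsCompact ((fun y : X => (y : ℝ)) '' {y | s.r x y}) :=
    ((hcl x).isCompact).image continuous_subtype_val
  obtain ⟨b, hbmem, hbub⟩ := hK.exists_isLeast ⟨x, ⟨x, Setoid.refl x, rfl⟩⟩
  obtain ⟨b', hb', rfl⟩ := hbmem
  exact ⟨b', hb', fun y hy => hbub ⟨y, hy, rfl⟩⟩

lemma dense_between (hcl : ∀ x : X, IsClosed {y | s.r x y})
    (hord : ∀ x : X, Set.OrdConnected {y | s.r x y})
    {e : ℕ → X} (he : DenseRange e) {C D : Quotient s} (h : qlt s C D) :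
    ∃ n, qlt s C (Quotient.mk s (e n)) ∧ qlt s (Quotient.mk s (e n)) D := by
  obtain ⟨x, y, hxy, hlt, rfl, rfl⟩ := h
  obtain ⟨b, hbx, hbmax⟩ := exists_max hcl x
  obtain ⟨c, hcy, hcmin⟩ := exists_min hcl y
  have hbc : b < c := coh hord hxy hlt hbx (Setoid.symm (Setoid.symm hcy))
  have hbcR : (b : ℝ) < (c : ℝ) := hbc
  set U : Set X := (fun y : X => (y : ℝ)) ⁻¹' Set.Ioo (b : ℝ) (c : ℝ) with hU
  have hUopen : IsOpen U := isOpen_Ioo.preimage continuous_subtype_val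
  have hUne : U.Nonempty := by
    refine ⟨⟨((b : ℝ) + c) / 2, ?_, ?_⟩, ?_, ?_⟩
    · have := b.2.1; linarith
    · have := c.2.2; linarith
    · show (b : ℝ) < ((b : ℝ) + c) / 2; linarith
    · show ((b : ℝ) + c) / 2 < (c : ℝ); linarith
  obtain ⟨n, hn⟩ := he.exists_mem_open hUopen hUne
  obtain ⟨hbn, hnc⟩ := hn
  refine ⟨n, qlt_of_lt ?_ ?_, qlt_of_lt ?_ ?_⟩
  · intro hrel
    exact absurd hbn (not_lt.mpr (hbmax _ hrel))
  · exact lt_of_le_of_lt (hbmax x (Setoid.refl x)) (Subtype.coe_lt_coe.mp hbn)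
  · intro hrel
    exact absurd hnc (not_lt.mpr (hcmin _ (Setoid.symm hrel)))
  · exact lt_of_lt_of_le (Subtype.coe_lt_coe.mp hnc) (hcmin y (Setoid.refl y))


lemma lo_le (z : X) : lo ≤ z := z.2.1
lemma le_hi (z : X) : z ≤ hi := z.2.2

lemma exists_phi (hord : ∀ x : X, Set.OrdConnected {y | s.r x y})
    (f : ↥(Set.Ioo (0:ℚ) 1) → Quotient s)
    (hf : ∀ q q', q < q' → qlt s (f q) (f q'))
    (hdense : ∀ C D, qlt s C D → ∃ q, qlt s C (f q) ∧ qlt s (f q) D) :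
    ∃ Φ : Quotient s → ℝ, (∀ C, Φ C ∈ Set.Icc (0:ℝ) 1) ∧
      (∀ C D, qlt s C D → Φ C < Φ D) ∧
      (∀ t ∈ Set.Icc (0:ℝ) 1, ∃ C, Φ C = t) := by
  classical
  set A : Quotient s → Set ℝ :=
    fun C => insert (0:ℝ) ((fun q : ↥(Set.Ioo (0:ℚ) 1) => ((q : ℚ) : ℝ)) ''
      {q | qlt s (f q) C}) with hA
  have hAub : ∀ C, ∀ r ∈ A C, r ≤ 1 := by
    rintro C r (rfl | ⟨q, -, rfl⟩)
    · norm_num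
    · show ((q:ℚ):ℝ) ≤ 1
      exact_mod_cast (le_of_lt q.2.2)
  have hbdd : ∀ C, BddAbove (A C) := fun C => ⟨1, fun r hr => hAub C r hr⟩
  have hne : ∀ C, (A C).Nonempty := fun C => ⟨0, Set.mem_insert _ _⟩
  set Φ : Quotient s → ℝ := fun C => sSup (A C) with hPhi
  have hb : ∀ C, Φ C ∈ Set.Icc (0:ℝ) 1 := fun C =>
    ⟨le_csSup (hbdd C) (Set.mem_insert _ _), csSup_le (hne C) (hAub C)⟩
  have hflt : ∀ q q', qlt s (f q) (f q') → q < q' := by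
    intro q q' h
    rcases lt_trichotomy q q' with h1 | h1 | h1
    · exact h1
    · exact absurd h (h1 ▸ qlt_irrefl hord (f q))
    · exact absurd h (qlt_asymm hord (hf _ _ h1))
  have hm : ∀ C D, qlt s C D → Φ C < Φ D := by
    intro C D h
    obtain ⟨q1, hq1C, hq1D⟩ := hdense C D h
    obtain ⟨q2, hq2a, hq2D⟩ := hdense _ D hq1D
    have h1 : Φ C ≤ ((q1 : ℚ) : ℝ) := by
      apply csSup_le (hne C)
      rintro r (rfl | ⟨q, hq, rfl⟩)
      · exact_mod_cast (le_of_lt (by exact_mod_cast q1.2.1))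
      · show ((q:ℚ):ℝ) ≤ ((q1:ℚ):ℝ)
        have h5 : q < q1 := hflt _ _ (qlt_trans hord hq hq1C)
        exact_mod_cast h5.le
    have h2 : ((q2 : ℚ) : ℝ) ≤ Φ D := le_csSup (hbdd D) (Or.inr ⟨q2, hq2D, rfl⟩)
    have h12 : ((q1 : ℚ) : ℝ) < ((q2 : ℚ) : ℝ) := by exact_mod_cast hflt _ _ hq2a
    linarith
  refine ⟨Φ, hb, hm, ?_⟩
  rintro t ⟨ht0, ht1⟩
  rcases eq_or_lt_of_le ht0 with rfl | htpos
  · refine ⟨Quotient.mk s lo, le_antisymm (csSup_le (hne _) ?_) (hb _).1⟩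
    rintro r (rfl | ⟨q, hq, rfl⟩)
    · exact le_rfl
    · exact absurd hq (qlt_bot hord _)
  · set At : Set ℝ := {r | ∃ (x : X) (q : ↥(Set.Ioo (0:ℚ) 1)),
      Quotient.mk s x = f q ∧ ((q : ℚ) : ℝ) < t ∧ (x : ℝ) = r} with hAt
    obtain ⟨q0, hq00, hq0t⟩ := exists_rat_btwn htpos
    have hq01 : q0 < 1 := by exact_mod_cast lt_of_lt_of_le hq0t ht1
    set b0 : ↥(Set.Ioo (0:ℚ) 1) := ⟨q0, by exact_mod_cast hq00, hq01⟩ with hb0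
    have hAtne : At.Nonempty :=
      ⟨((f b0).out : ℝ), (f b0).out, b0, Quotient.out_eq _, hq0t, rfl⟩
    have hAtbdd : BddAbove At := by
      refine ⟨1, ?_⟩
      rintro r ⟨x, q, -, -, rfl⟩
      exact x.2.2
    have hu1 : sSup At ≤ 1 := csSup_le hAtne (fun r hr => by
      obtain ⟨x, q, -, -, rfl⟩ := hr; exact x.2.2)
    obtain ⟨r0, hr0⟩ := hAtne
    have hr00 : (0:ℝ) ≤ r0 := by
      obtain ⟨x, q, -, -, rfl⟩ := hr0; exact x.2.1
    have hu0 : (0:ℝ) ≤ sSup At := le_trans hr00 (le_csSup hAtbdd hr0)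
    set u : X := ⟨sSup At, hu0, hu1⟩ with hu
    have hcoe : (u : ℝ) = sSup At := rfl
    refine ⟨Quotient.mk s u, ?_⟩
    have key1 : ∀ q : ↥(Set.Ioo (0:ℚ) 1), t ≤ ((q:ℚ):ℝ) →
        ¬ qlt s (f q) (Quotient.mk s u) := by
      intro q hq hqlt
      have hyq : Quotient.mk s (f q).out = f q := Quotient.out_eq _
      have hub : ∀ r ∈ At, r ≤ ((f q).out : ℝ) := by
        rintro r ⟨x, q', hx, hq't, rfl⟩
        have hqq' : q' < q := by
          have h3 : ((q':ℚ):ℝ) < ((q:ℚ):ℝ) := lt_of_lt_of_le hq't hq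
          exact_mod_cast h3
        have h2 : qlt s (Quotient.mk s x) (Quotient.mk s (f q).out) := by
          rw [hx, hyq]; exact hf _ _ hqq'
        exact (Subtype.coe_lt_coe.mpr (lt_of_qlt hord h2)).le
      have hyu : (u : ℝ) ≤ ((f q).out : ℝ) := by
        rw [hcoe]; exact csSup_le ⟨r0, hr0⟩ hub
      rw [← hyq] at hqlt
      exact absurd (Subtype.coe_lt_coe.mpr (lt_of_qlt hord hqlt)) (not_lt.mpr hyu)
    have key2 : ∀ q : ↥(Set.Ioo (0:ℚ) 1), ((q:ℚ):ℝ) < t →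
        ¬ qlt s (Quotient.mk s u) (f q) := by
      intro q hq hqlt
      have hyq : Quotient.mk s (f q).out = f q := Quotient.out_eq _
      have hmem : ((f q).out : ℝ) ∈ At := ⟨(f q).out, q, hyq, hq, rfl⟩
      have h1 : ((f q).out : ℝ) ≤ sSup At := le_csSup hAtbdd hmem
      rw [← hyq] at hqlt
      have h2 : (u : ℝ) < ((f q).out : ℝ) := Subtype.coe_lt_coe.mpr (lt_of_qlt hord hqlt)
      rw [hcoe] at h2
      linarith
    have hle : Φ (Quotient.mk s u) ≤ t := by
      apply csSup_le (hne _)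
      rintro r (rfl | ⟨q, hq, rfl⟩)
      · exact htpos.le
      · by_contra hc
        push_neg at hc
        exact key1 q hc.le hq
    have hge : t ≤ Φ (Quotient.mk s u) := by
      by_contra hc
      push_neg at hc
      have hmax : max (Φ (Quotient.mk s u)) 0 < t := max_lt hc htpos
      obtain ⟨q3, hq3a, hq3b⟩ := exists_rat_btwn hmax
      have hq3pos : (0:ℚ) < q3 := by
        have h3 : (0:ℝ) < (q3:ℝ) := lt_of_le_of_lt (le_max_right _ _) hq3a
        exact_mod_cast h3
      have hq31 : q3 < 1 := by exact_mod_cast lt_of_lt_of_le hq3b ht1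
      set b3 : ↥(Set.Ioo (0:ℚ) 1) := ⟨q3, hq3pos, hq31⟩ with hb3
      have hPhiq3 : Φ (Quotient.mk s u) < (q3:ℝ) := lt_of_le_of_lt (le_max_left _ _) hq3a
      rcases qlt_trichotomy (f b3) (Quotient.mk s u) with heq | hlt | hgt
      · obtain ⟨q4, hq4a, hq4b⟩ := exists_rat_btwn hPhiq3
        have hq4pos : (0:ℚ) < q4 := by
          have h4 : (0:ℝ) < (q4:ℝ) := lt_of_le_of_lt (hb _).1 hq4a
          exact_mod_cast h4
        have hq4lt : q4 < q3 := by exact_mod_cast hq4b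
        have hq41 : q4 < 1 := lt_trans hq4lt hq31
        set b4 : ↥(Set.Ioo (0:ℚ) 1) := ⟨q4, hq4pos, hq41⟩ with hb4
        have h5 : qlt s (f b4) (Quotient.mk s u) :=
          heq ▸ hf b4 b3 (Subtype.mk_lt_mk.mpr hq4lt)
        have h6 : ((q4:ℚ):ℝ) ≤ Φ (Quotient.mk s u) :=
          le_csSup (hbdd _) (Or.inr ⟨b4, h5, rfl⟩)
        linarith
      · have h6 : ((q3:ℚ):ℝ) ≤ Φ (Quotient.mk s u) :=
          le_csSup (hbdd _) (Or.inr ⟨b3, hlt, rfl⟩)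
        linarith
      · exact key2 b3 hq3b hgt
    exact le_antisymm hle hge

lemma phi_cont (hord : ∀ x : X, Set.OrdConnected {y | s.r x y}) {Φ : Quotient s → ℝ}
    (hb : ∀ C, Φ C ∈ Set.Icc (0:ℝ) 1)
    (hm : ∀ C D, qlt s C D → Φ C < Φ D)
    (hs' : ∀ t ∈ Set.Icc (0:ℝ) 1, ∃ C, Φ C = t) :
    Continuous fun x : X => Φ (Quotient.mk s x) := by
  have hmono : ∀ x y : X, x ≤ y → Φ (Quotient.mk s x) ≤ Φ (Quotient.mk s y) := by
    intro x y h
    rcases le_cases (s := s) h with he | hlt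
    · rw [he]
    · exact (hm _ _ hlt).le
  rw [Metric.continuous_iff]
  intro x ε hε
  have hright : ∃ δ > (0:ℝ), ∀ y : X, x ≤ y → (y:ℝ) - (x:ℝ) < δ →
      Φ (Quotient.mk s y) < Φ (Quotient.mk s x) + ε := by
    by_cases h1 : 1 < Φ (Quotient.mk s x) + ε
    · exact ⟨1, one_pos, fun y _ _ => lt_of_le_of_lt (hb _).2 h1⟩
    · push_neg at h1
      have ht' : Φ (Quotient.mk s x) + ε/2 ∈ Set.Icc (0:ℝ) 1 := by
        constructor
        · have := (hb (Quotient.mk s x)).1; linarith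
        · linarith
      obtain ⟨D, hD⟩ := hs' _ ht'
      obtain ⟨d, rfl⟩ := Quotient.exists_rep D
      have hqlt : qlt s (Quotient.mk s x) (Quotient.mk s d) := by
        rcases qlt_trichotomy (Quotient.mk s x) (Quotient.mk s d) with he | hlt | hgt
        · rw [← he] at hD; linarith
        · exact hlt
        · have := hm _ _ hgt; linarith
      have hxd : x < d := lt_of_qlt hord hqlt
      refine ⟨(d:ℝ) - (x:ℝ), by simpa using Subtype.coe_lt_coe.mpr hxd, fun y hxy hy => ?_⟩
      have hyd : y ≤ d := by
        have : (y:ℝ) < (d:ℝ) := by linarith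
        exact (Subtype.coe_lt_coe.mp this).le
      have := hmono y d hyd
      linarith
  have hleft : ∃ δ > (0:ℝ), ∀ y : X, y ≤ x → (x:ℝ) - (y:ℝ) < δ →
      Φ (Quotient.mk s x) - ε < Φ (Quotient.mk s y) := by
    by_cases h1 : Φ (Quotient.mk s x) - ε < 0
    · exact ⟨1, one_pos, fun y _ _ => lt_of_lt_of_le h1 (hb _).1⟩
    · push_neg at h1
      have ht' : Φ (Quotient.mk s x) - ε/2 ∈ Set.Icc (0:ℝ) 1 := by
        constructor
        · linarith
        · have := (hb (Quotient.mk s x)).2; linarith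
      obtain ⟨D, hD⟩ := hs' _ ht'
      obtain ⟨d, rfl⟩ := Quotient.exists_rep D
      have hqlt : qlt s (Quotient.mk s d) (Quotient.mk s x) := by
        rcases qlt_trichotomy (Quotient.mk s d) (Quotient.mk s x) with he | hlt | hgt
        · rw [he] at hD; linarith
        · exact hlt
        · have := hm _ _ hgt; linarith
      have hxd : d < x := lt_of_qlt hord hqlt
      refine ⟨(x:ℝ) - (d:ℝ), by simpa using Subtype.coe_lt_coe.mpr hxd, fun y hxy hy => ?_⟩
      have hyd : d ≤ y := by
        have : (d:ℝ) < (y:ℝ) := by linarith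
        exact (Subtype.coe_lt_coe.mp this).le
      have := hmono d y hyd
      linarith
  obtain ⟨δR, hδR, hR⟩ := hright
  obtain ⟨δL, hδL, hL⟩ := hleft
  refine ⟨min δL δR, lt_min hδL hδR, fun y hy => ?_⟩
  have hdist : |(y:ℝ) - (x:ℝ)| < min δL δR := by
    rw [Subtype.dist_eq, Real.dist_eq] at hy
    exact hy
  rw [Real.dist_eq, abs_lt]
  rcases le_total x y with h | h
  · have h1 : Φ (Quotient.mk s y) < Φ (Quotient.mk s x) + ε := by
      apply hR y h
      have := abs_lt.mp hdist
      exact lt_of_lt_of_le this.2 (min_le_right _ _)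
    have h2 := hmono x y h
    constructor <;> linarith
  · have h1 : Φ (Quotient.mk s x) - ε < Φ (Quotient.mk s y) := by
      apply hL y h
      have := abs_lt.mp hdist
      have h3 : -(min δL δR) < (y:ℝ) - (x:ℝ) := this.1
      have h4 : min δL δR ≤ δL := min_le_left _ _
      linarith
    have h2 := hmono y x h
    constructor <;> linarith

end IntervalDecompositionAux

open IntervalDecompositionAux

attribute [-instance] Quotient.instPreorder Quotient.instLE_mathlib

/-- A nontrivial decomposition of a compact interval into closed subintervals has
quotient space homeomorphic to a compact interval.  The decomposition of
`I = [0,1]` is encoded as a setoid whose classes are closed and order-connected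
(i.e. closed subintervals); nontrivial means it has more than one class. -/
theorem interval_decomposition_quotient
    (s : Setoid (Set.Icc (0 : ℝ) 1))
    (hcl : ∀ x, IsClosed {y | s.r x y})
    (hord : ∀ x, Set.OrdConnected {y | s.r x y})
    (hnt : ∃ x y, ¬ s.r x y) :
    Nonempty (Quotient s ≃ₜ Set.Icc (0 : ℝ) 1) := by
  classical
  obtain ⟨e, he⟩ := TopologicalSpace.exists_dense_seq X
  have hbotop : qlt s (Quotient.mk s lo) (Quotient.mk s hi) := by
    refine qlt_of_lt ?_ ?_
    · intro h
      obtain ⟨x, y, hxy⟩ := hnt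
      have hx : s.r lo x := rel_between hord h (lo_le x) (le_hi x)
      have hy : s.r lo y := rel_between hord h (lo_le y) (le_hi y)
      exact hxy (Setoid.trans (Setoid.symm hx) hy)
    · exact Subtype.coe_lt_coe.mp (by norm_num [lo, hi])
  set S : Set (Quotient s) := {C | (∃ n, Quotient.mk s (e n) = C) ∧
      qlt s (Quotient.mk s lo) C ∧ qlt s C (Quotient.mk s hi)} with hS
  have hSmem : ∀ (n : ℕ) (C D : Quotient s), qlt s C (Quotient.mk s (e n)) →
      qlt s (Quotient.mk s (e n)) D → Quotient.mk s (e n) ∈ S := by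
    intro n C D h1 h2
    refine ⟨⟨n, rfl⟩, ?_, ?_⟩
    · rcases qlt_trichotomy (Quotient.mk s lo) (Quotient.mk s (e n)) with heq | h | h
      · rw [← heq] at h1
        exact absurd h1 (qlt_bot hord C)
      · exact h
      · exact absurd h (qlt_bot hord _)
    · rcases qlt_trichotomy (Quotient.mk s (e n)) (Quotient.mk s hi) with heq | h | h
      · rw [heq] at h2
        exact absurd h2 (qlt_top hord D)
      · exact h
      · exact absurd h (qlt_top hord _)
  haveI hsto : IsStrictTotalOrder ↥S (fun a b : ↥S => qlt s a.1 b.1) :=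
    { trichotomous := fun a b => by
        rcases qlt_trichotomy a.1 b.1 with h | h | h
        · exact fun _ _ => Subtype.ext h
        · exact fun h' _ => absurd h h'
        · exact fun _ h' => absurd h h'
      irrefl := fun a => qlt_irrefl hord a.1
      trans := fun a b c h1 h2 => qlt_trans hord h1 h2 }
  letI : LinearOrder ↥S := linearOrderOfSTO (fun a b : ↥S => qlt s a.1 b.1)
  haveI : Countable ↥S :=
    (((Set.countable_range (fun n => Quotient.mk s (e n))).mono
      (fun C hC => hC.1)).to_subtype)
  haveI : Nonempty ↥S := by
    obtain ⟨n, h1, h2⟩ := dense_between hcl hord he hbotop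
    exact ⟨⟨_, hSmem n _ _ h1 h2⟩⟩
  haveI : DenselyOrdered ↥S := by
    constructor
    intro a b hab
    obtain ⟨n, h1, h2⟩ := dense_between hcl hord he (hab : qlt s a.1 b.1)
    exact ⟨⟨_, hSmem n _ _ h1 h2⟩, h1, h2⟩
  haveI : NoMinOrder ↥S := by
    constructor
    intro a
    obtain ⟨n, h1, h2⟩ := dense_between hcl hord he a.2.2.1
    exact ⟨⟨_, hSmem n _ _ h1 h2⟩, h2⟩
  haveI : NoMaxOrder ↥S := by
    constructor
    intro a
    obtain ⟨n, h1, h2⟩ := dense_between hcl hord he a.2.2.2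
    exact ⟨⟨_, hSmem n _ _ h1 h2⟩, h1⟩
  haveI : Nonempty ↥(Set.Ioo (0:ℚ) 1) := ⟨⟨1/2, by norm_num⟩⟩
  obtain ⟨φ⟩ := Order.iso_of_countable_dense ↥S ↥(Set.Ioo (0:ℚ) 1)
  set f : ↥(Set.Ioo (0:ℚ) 1) → Quotient s := fun q => (φ.symm q).1 with hf'
  have hf : ∀ q q', q < q' → qlt s (f q) (f q') := by
    intro q q' h
    exact (φ.symm.lt_iff_lt.mpr h : qlt s (φ.symm q).1 (φ.symm q').1)
  have hdense : ∀ C D, qlt s C D → ∃ q, qlt s C (f q) ∧ qlt s (f q) D := by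
    intro C D h
    obtain ⟨n, h1, h2⟩ := dense_between hcl hord he h
    have hmem : Quotient.mk s (e n) ∈ S := hSmem n _ _ h1 h2
    refine ⟨φ ⟨_, hmem⟩, ?_, ?_⟩
    · rw [hf']
      simp only [OrderIso.symm_apply_apply]
      exact h1
    · rw [hf']
      simp only [OrderIso.symm_apply_apply]
      exact h2
  obtain ⟨Φ, hb, hm, hsurj⟩ := exists_phi hord f hf hdense
  have hcont : Continuous fun x : X => Φ (Quotient.mk s x) := phi_cont hord hb hm hsurj
  set G : Quotient s → ↥(Set.Icc (0:ℝ) 1) :=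
    Quotient.lift (fun x : X => (⟨Φ (Quotient.mk s x), hb _⟩ : ↥(Set.Icc (0:ℝ) 1)))
      (fun a b h => Subtype.ext (congrArg Φ (Quotient.sound h))) with hG
  have hGc : Continuous G := Continuous.quotient_lift (hcont.subtype_mk _) _
  have hGbij : Function.Bijective G := by
    constructor
    · intro C D h
      obtain ⟨x, rfl⟩ := Quotient.exists_rep C
      obtain ⟨y, rfl⟩ := Quotient.exists_rep D
      have hval : Φ (Quotient.mk s x) = Φ (Quotient.mk s y) := congrArg Subtype.val h
      rcases qlt_trichotomy (Quotient.mk s x) (Quotient.mk s y) with heq | hlt | hlt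
      · exact heq
      · exact absurd hval (ne_of_lt (hm _ _ hlt))
      · exact absurd hval.symm (ne_of_lt (hm _ _ hlt))
    · intro t
      obtain ⟨C, hC⟩ := hsurj t.1 t.2
      obtain ⟨x, rfl⟩ := Quotient.exists_rep C
      exact ⟨Quotient.mk s x, Subtype.ext hC⟩
  have hEc : Continuous ⇑(Equiv.ofBijective G hGbij) := hGc
  exact ⟨hEc.homeoOfEquivCompactToT2⟩
end

section
/- Let F be a nonsingular continuous flow on a compact metric space X. Then F is expansive in the Bowen–Walters sense (property E1) if and only if it satisfies: for all ε > 0 there exists δ > 0 such that whenever x, y ∈ X δ-fellow travel up to reparametrization, then y lies on the orbit of x and the flow segment from y to x lies in the ε-ball around x (property E2). -/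
open Metric

/-- `F` is a continuous flow. -/
def IsFlow {X : Type*} [TopologicalSpace X] (F : ℝ → X → X) : Prop :=
  Continuous (fun p : ℝ × X => F p.1 p.2) ∧ (∀ x, F 0 x = x) ∧
    ∀ s t x, F s (F t x) = F (s + t) x

/-- `x` and `y` δ-fellow travel up to reparametrization: there is an increasing
homeomorphism `h : ℝ → ℝ` fixing `0` with `dist (F t x) (F (h t) y) < δ` for all `t`. -/
def FellowTravel {X : Type*} [MetricSpace X] (F : ℝ → X → X) (δ : ℝ) (x y : X) : Prop :=
  ∃ h : ℝ → ℝ, Continuous h ∧ StrictMono h ∧ Function.Surjective h ∧ h 0 = 0 ∧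
    ∀ t : ℝ, dist (F t x) (F (h t) y) < δ

/-- Bowen–Walters expansiveness (E1): fellow travellers lie on the same orbit at a
small time. -/
def PropE1 {X : Type*} [MetricSpace X] (F : ℝ → X → X) : Prop :=
  ∀ ε > 0, ∃ δ > 0, ∀ x y : X, FellowTravel F δ x y → ∃ t : ℝ, |t| < ε ∧ y = F t x

/-- Property (E2): fellow travellers lie on the same orbit, and the flow segment from
`y` to `x` lies in the ε-ball around `x`. -/
def PropE2 {X : Type*} [MetricSpace X] (F : ℝ → X → X) : Prop :=
  ∀ ε > 0, ∃ δ > 0, ∀ x y : X, FellowTravel F δ x y →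
    ∃ s : ℝ, x = F s y ∧ ∀ u ∈ Set.uIcc 0 s, F u y ∈ ball x ε

/-!
For `E1 → E2`: by compactness the flow is uniformly close to the identity for short times, so the
short flow segment from `y = F t x` back to `x` stays near `x`.

For `E2 → E1`: the periods of a point form a closed subgroup of `ℝ`, which for a nonsingular
flow is cyclic; hence no point is fixed by both `F ε` and `F (ε / √2)`, and by compactness every
point is moved a distance at least some `α > 0` by one of these two maps. A flow segment inside
a ball of radius `α / 2` therefore has time length less than `ε`.
-/

open Set Filter Topology

theorem not_irrational_div_of_mem_zmultiples {g a b : ℝ} (ha : a ∈ AddSubgroup.zmultiples g)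
    (hb : b ∈ AddSubgroup.zmultiples g) : ¬Irrational (a / b) := by
  obtain ⟨n, rfl⟩ := ha
  obtain ⟨m, rfl⟩ := hb
  dsimp only
  rcases eq_or_ne g 0 with rfl | hg
  · simp
  · rw [zsmul_eq_mul, zsmul_eq_mul, mul_div_mul_right _ _ hg]
    exact_mod_cast Rat.not_irrational ((n : ℚ) / m)

theorem exists_Icc_add_subset_uIcc {c s : ℝ} (hc : c ≤ |s|) :
    ∃ w, Icc w (w + c) ⊆ uIcc 0 s := by
  rcases le_or_gt 0 s with hs | hs
  · rw [abs_of_nonneg hs] at hc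
    exact ⟨0, by rw [uIcc_of_le hs, zero_add]; exact Icc_subset_Icc le_rfl hc⟩
  · rw [abs_of_neg hs] at hc
    exact ⟨s, by rw [uIcc_of_gt hs]; exact Icc_subset_Icc le_rfl (by linarith)⟩

namespace IsFlow

variable {X : Type*} {F : ℝ → X → X}

section Topological

variable [TopologicalSpace X]

theorem apply_zero (hF : IsFlow F) (x : X) : F 0 x = x :=
  hF.2.1 x

theorem apply_apply (hF : IsFlow F) (s t : ℝ) (x : X) : F s (F t x) = F (s + t) x :=
  hF.2.2 s t x

theorem continuous_orbit (hF : IsFlow F) (y : X) : Continuous fun t => F t y :=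
  hF.1.comp (continuous_id.prodMk continuous_const)

theorem continuous_apply (hF : IsFlow F) (t : ℝ) : Continuous (F t) :=
  hF.1.comp (continuous_const.prodMk continuous_id)

theorem apply_neg_apply (hF : IsFlow F) (s : ℝ) (y : X) : F (-s) (F s y) = y := by
  rw [hF.apply_apply, neg_add_cancel, hF.apply_zero]

def periods (hF : IsFlow F) (y : X) : AddSubgroup ℝ where
  carrier := {t | F t y = y}
  zero_mem' := hF.apply_zero y
  add_mem' {a b} (ha : F a y = y) (hb : F b y = y) := show F (a + b) y = y by
    rw [← hF.apply_apply, hb, ha]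
  neg_mem' {a} (ha : F a y = y) := show F (-a) y = y by
    conv_lhs => rw [← ha]
    exact hF.apply_neg_apply a y

theorem isClosed_periods [T1Space X] (hF : IsFlow F) (y : X) : IsClosed (hF.periods y : Set ℝ) :=
  isClosed_singleton.preimage (hF.continuous_orbit y)

theorem apply_ne_or_apply_div_sqrt_two_ne [T1Space X] (hF : IsFlow F)
    (hns : ∀ x : X, ∃ t : ℝ, F t x ≠ x) {c : ℝ} (hc : c ≠ 0) (y : X) :
    F c y ≠ y ∨ F (c / √2) y ≠ y := by
  by_contra! ⟨hc₁, hc₂⟩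
  rcases (hF.periods y).dense_or_cyclic with hdense | ⟨g, hg⟩
  · obtain ⟨t, ht⟩ := hns y
    have huniv : (hF.periods y : Set ℝ) = univ := by
      rw [← (hF.isClosed_periods y).closure_eq, hdense.closure_eq]
    exact ht (eq_univ_iff_forall.1 huniv t)
  · rw [← AddSubgroup.zmultiples_eq_closure] at hg
    have hc₁' : c ∈ hF.periods y := hc₁
    have hc₂' : c / √2 ∈ hF.periods y := hc₂
    rw [hg] at hc₁' hc₂'
    have := not_irrational_div_of_mem_zmultiples hc₁' hc₂'
    rw [div_div_cancel₀ hc] at this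
    exact this irrational_sqrt_two

end Topological

theorem exists_forall_dist_apply_lt [PseudoMetricSpace X] (hF : IsFlow F) {x y : X}
    {r s c : ℝ} (hseg : ∀ u ∈ uIcc 0 s, F u y ∈ Metric.ball x r) (hc : c ≤ |s|) :
    ∃ z, ∀ u ∈ Icc 0 c, dist (F u z) z < 2 * r := by
  obtain ⟨w, hw⟩ := exists_Icc_add_subset_uIcc hc
  refine ⟨F w y, fun u hu => ?_⟩
  have hz := hseg w (hw ⟨le_rfl, by linarith [hu.1, hu.2]⟩)
  have hwu := hseg (u + w) (hw ⟨by linarith [hu.1], by linarith [hu.2]⟩)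
  rw [Metric.mem_ball] at hz hwu
  rw [hF.apply_apply]
  linarith [dist_triangle_right (F (u + w) y) (F w y) x]

section Compact

variable [MetricSpace X] [CompactSpace X]

theorem eventually_forall_dist_lt (hF : IsFlow F) {ε : ℝ} (hε : 0 < ε) :
    ∀ᶠ t in 𝓝 0, ∀ x, dist (F t x) x < ε := by
  have hdist : Continuous fun p : ℝ × X => dist (F p.1 p.2) p.2 := hF.1.dist continuous_snd
  simpa using isCompact_univ.eventually_forall_of_forall_eventually (x₀ := (0 : ℝ))
    (P := fun t x => dist (F t x) x < ε) fun y _ =>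
      hdist.continuousAt.eventually_lt continuousAt_const (by simpa [hF.apply_zero] using hε)

theorem exists_pos_le_max_dist (hF : IsFlow F) (hns : ∀ x : X, ∃ t : ℝ, F t x ≠ x) {c : ℝ}
    (hc : c ≠ 0) :
    ∃ α > 0, ∀ y, α ≤ max (dist (F c y) y) (dist (F (c / √2) y) y) := by
  have hcont : Continuous fun y => max (dist (F c y) y) (dist (F (c / √2) y) y) :=
    ((hF.continuous_apply c).dist continuous_id).max
      ((hF.continuous_apply _).dist continuous_id)
  obtain ⟨α, hα, hle⟩ := isCompact_univ.exists_forall_le' hcont.continuousOn (a := 0)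
    fun y _ => lt_max_iff.2 <| (hF.apply_ne_or_apply_div_sqrt_two_ne hns hc y).imp
      dist_pos.2 dist_pos.2
  exact ⟨α, hα, fun y => hle y (mem_univ y)⟩

theorem propE2_of_propE1 (hF : IsFlow F) (h : PropE1 F) : PropE2 F := by
  intro ε hε
  obtain ⟨η, hη, hsmall⟩ := Metric.eventually_nhds_iff.1 (hF.eventually_forall_dist_lt hε)
  obtain ⟨δ, hδ, hE1⟩ := h η hη
  refine ⟨δ, hδ, fun x y hxy => ?_⟩
  obtain ⟨t, ht, rfl⟩ := hE1 x y hxy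
  refine ⟨-t, (hF.apply_neg_apply t x).symm, fun u hu => ?_⟩
  have hut : |u - -t| ≤ |0 - -t| := abs_sub_left_of_mem_uIcc (uIcc_comm 0 (-t) ▸ hu)
  rw [zero_sub, neg_neg, sub_neg_eq_add] at hut
  rw [hF.apply_apply, Metric.mem_ball]
  refine hsmall ?_ x
  rw [Real.dist_eq, sub_zero]
  exact hut.trans_lt ht

theorem propE1_of_propE2 (hF : IsFlow F) (hns : ∀ x : X, ∃ t : ℝ, F t x ≠ x) (h : PropE2 F) :
    PropE1 F := by
  intro ε hε
  obtain ⟨α, hα, hdisp⟩ := hF.exists_pos_le_max_dist hns hε.ne'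
  obtain ⟨δ, hδ, hE2⟩ := h (α / 2) (half_pos hα)
  refine ⟨δ, hδ, fun x y hxy => ?_⟩
  obtain ⟨s, rfl, hseg⟩ := hE2 x y hxy
  refine ⟨-s, ?_, (hF.apply_neg_apply s y).symm⟩
  rw [abs_neg]
  by_contra! hs
  obtain ⟨z, hz⟩ := hF.exists_forall_dist_apply_lt hseg hs
  have h₁ := hz ε ⟨hε.le, le_rfl⟩
  have h₂ := hz (ε / √2) ⟨by positivity, div_le_self hε.le Real.one_lt_sqrt_two.le⟩
  rw [mul_div_cancel₀ _ two_ne_zero] at h₁ h₂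
  exact (hdisp z).not_gt (max_lt h₁ h₂)

end Compact

end IsFlow

/-- For a nonsingular continuous flow on a compact metric space, the Bowen–Walters
expansiveness property (E1) is equivalent to property (E2). -/
theorem expansive_iff {X : Type*} [MetricSpace X] [CompactSpace X]
    (F : ℝ → X → X) (hF : IsFlow F) (hns : ∀ x : X, ∃ t : ℝ, F t x ≠ x) :
    PropE1 F ↔ PropE2 F :=
  ⟨hF.propE2_of_propE1, hF.propE1_of_propE2 hns⟩
end
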